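/- arXiv:2412.04910 — 4 statements merged into one kernel-verified Lean document; each statement's English description precedes it below -/
import Mathlib

section
/- Let d ≥ 4 and use the convention that binomial coefficients C(n,k) = 0 when k < 0 or k > n. If d is even then |Δ_{d,0,ReLU}| = (4/2^d)·C(d−3, d/2 − 1), and if d is odd then |Δ_{d,−1,ReLU}| = (1/2^d)·C(d−1, (d−1)/2). Consequently there are absolute constants 0 < c ≤ c' such that for all d ≥ 4: c/√d ≤ |Δ_{d,0,ReLU}| ≤ c'/√d when d is even, and c/√d ≤ |Δ_{d,−1,ReLU}| ≤ c'/√d when d is odd. -/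
/-- `pm b` is the ±1 real value encoded by a Boolean. -/
noncomputable def pm (b : Bool) : ℝ := if b then 1 else -1

/-- Expectation of `F` over the uniform distribution on `{±1}^d`
(encoded as `Fin d → Bool`): a finite average over the `2^d` sign vectors. -/
noncomputable def Eunif (d : ℕ) (F : (Fin d → Bool) → ℝ) : ℝ :=
  (∑ x : Fin d → Bool, F x) / 2 ^ d

/-- The `(d−a)`-parity `f_a(x) = ∏_{j=1}^{d−a} x_j`. -/
noncomputable def parityF (d a : ℕ) (x : Fin d → Bool) : ℝ :=
  ∏ j ∈ Finset.univ.filter (fun j : Fin d => (j : ℕ) < d - a), pm (x j)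

/-- Dot product of two sign vectors. -/
noncomputable def dotB {d : ℕ} (w x : Fin d → Bool) : ℝ := ∑ j, pm (w j) * pm (x j)

/-- `Δ^{(a)}_{d,b,σ} = E_{x∼Unif({±1}^d)}[(∏_{j=1}^{d−a} x_j) · σ(∑_{j=1}^d x_j + b)]`. -/
noncomputable def Δa (d a : ℕ) (b : ℝ) (σ : ℝ → ℝ) : ℝ :=
  Eunif d (fun x => parityF d a x * σ ((∑ j, pm (x j)) + b))


/-- `ReLU(t) = max(0,t)`. -/
noncomputable def ReLU : ℝ → ℝ := fun t => max 0 t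

def eqv (d : ℕ) : (Fin d → Bool) ≃ Finset (Fin d) where
  toFun := fun x => Finset.univ.filter (fun j => x j)
  invFun := fun s => fun j => j ∈ s
  left_inv := fun x => by ext j; simp
  right_inv := fun s => by ext j; simp

lemma eqv_symm_apply (d : ℕ) (s : Finset (Fin d)) (j : Fin d) :
    (eqv d).symm s j = decide (j ∈ s) := rfl

lemma group (d : ℕ) (b : ℝ) (σ : ℝ → ℝ) :
    Δa d 0 b σ = (∑ k ∈ Finset.range (d + 1),
      (-1 : ℝ) ^ (d - k) * (d.choose k : ℝ) * σ (2 * k - d + b)) / 2 ^ d := by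
  classical
  unfold Δa Eunif
  congr 1
  rw [← Equiv.sum_comp (eqv d).symm (fun x => parityF d 0 x * σ ((∑ j, pm (x j)) + b))]
  have key : ∀ s : Finset (Fin d),
      parityF d 0 ((eqv d).symm s) * σ ((∑ j, pm ((eqv d).symm s j)) + b)
        = (-1 : ℝ) ^ (d - s.card) * σ (2 * s.card - d + b) := by
    intro s
    have hc : s.card ≤ d := by simpa using Finset.card_le_card (Finset.subset_univ s)
    have h1 : parityF d 0 ((eqv d).symm s) = (-1 : ℝ) ^ (d - s.card) := by
      unfold parityF
      have hf : (Finset.univ.filter (fun j : Fin d => (j : ℕ) < d - 0)) = Finset.univ := by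
        apply Finset.filter_true_of_mem; intro j _; simpa using j.isLt
      rw [hf, ← Finset.prod_mul_prod_compl s]
      have hs : ∀ j ∈ s, pm ((eqv d).symm s j) = 1 := by
        intro j hj; simp [eqv_symm_apply, pm, hj]
      have hsc : ∀ j ∈ sᶜ, pm ((eqv d).symm s j) = -1 := by
        intro j hj; simp only [Finset.mem_compl] at hj; simp [eqv_symm_apply, pm, hj]
      rw [Finset.prod_congr rfl hs, Finset.prod_congr rfl hsc]
      simp [Finset.card_compl]
    have h2 : (∑ j, pm ((eqv d).symm s j)) = 2 * s.card - d := by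
      rw [← Finset.sum_add_sum_compl s]
      have hs : ∀ j ∈ s, pm ((eqv d).symm s j) = 1 := by
        intro j hj; simp [eqv_symm_apply, pm, hj]
      have hsc : ∀ j ∈ sᶜ, pm ((eqv d).symm s j) = -1 := by
        intro j hj; simp only [Finset.mem_compl] at hj; simp [eqv_symm_apply, pm, hj]
      rw [Finset.sum_congr rfl hs, Finset.sum_congr rfl hsc]
      simp only [Finset.sum_const, nsmul_eq_mul, mul_one, mul_neg_one, Finset.card_compl]
      have : ((d - s.card : ℕ) : ℝ) = (d : ℝ) - s.card := by
        rw [Nat.cast_sub hc]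
      simp [Fintype.card_fin] at this ⊢
      rw [this]; ring
    rw [h1, h2]
  rw [Finset.sum_congr rfl (fun s _ => key s)]
  rw [← Finset.powerset_univ, Finset.sum_powerset_apply_card
    (fun k => (-1 : ℝ) ^ (d - k) * σ (2 * k - d + b))]
  simp [Finset.card_univ, mul_comm, mul_assoc, mul_left_comm]

/-- partial alternating sum of binomial coefficients -/
lemma I1 (n r : ℕ) (hn : 1 ≤ n) (h1 : 1 ≤ r) (h2 : r ≤ n + 1) :
    ∑ k ∈ Finset.Ico r (n + 1), (-1 : ℝ) ^ k * (n.choose k : ℝ)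
      = (-1 : ℝ) ^ r * ((n - 1).choose (r - 1) : ℝ) := by
  set g : ℕ → ℝ := fun k => (-1 : ℝ) ^ k * ((n - 1).choose (k - 1) : ℝ) with hg
  have step : ∀ k, 1 ≤ k → (-1 : ℝ) ^ k * (n.choose k : ℝ) = g k - g (k + 1) := by
    intro k hk
    obtain ⟨k, rfl⟩ := Nat.exists_eq_add_of_le hk
    obtain ⟨n, rfl⟩ := Nat.exists_eq_add_of_le hn
    simp only [hg]
    have : (1 + n).choose (1 + k) = n.choose k + n.choose (1 + k) := by
      rw [add_comm 1 n, add_comm 1 k, Nat.choose_succ_succ n k, add_comm]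
    rw [this]
    have h1 : 1 + k - 1 = k := by omega
    have h2 : 1 + n - 1 = n := by omega
    have h3 : 1 + k + 1 - 1 = k + 1 := by omega
    rw [h1, h2, h3]
    push_cast
    ring
  have := Finset.sum_Ico_eq_sum_range (f := fun k => (-1 : ℝ) ^ k * (n.choose k : ℝ))
    (m := r) (n := n + 1)
  rw [this]
  have := Finset.sum_range_sub' (f := fun i => g (r + i)) (n := n + 1 - r)
  have hcong : ∀ i ∈ Finset.range (n + 1 - r),
      (-1 : ℝ) ^ (r + i) * (n.choose (r + i) : ℝ) = g (r + i) - g (r + (i + 1)) := by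
    intro i _
    have h := step (r + i) (by omega)
    rwa [add_assoc] at h
  rw [Finset.sum_congr rfl hcong, this]
  have : r + (n + 1 - r) = n + 1 := by omega
  rw [this]
  have : g (n + 1) = 0 := by
    simp only [hg]
    rw [Nat.choose_eq_zero_of_lt (by omega)]
    simp
  rw [this, sub_zero]
  simp [hg]

lemma I2 (n r : ℕ) (hn : 2 ≤ n) (h1 : 2 ≤ r) (h2 : r ≤ n + 1) :
    ∑ k ∈ Finset.Ico r (n + 1), (-1 : ℝ) ^ k * (k : ℝ) * (n.choose k : ℝ)
      = (-1 : ℝ) ^ r * (n : ℝ) * ((n - 2).choose (r - 2) : ℝ) := by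
  have key : ∀ k ∈ Finset.Ico r (n + 1),
      (-1 : ℝ) ^ k * (k : ℝ) * (n.choose k : ℝ)
        = -(n : ℝ) * ((-1 : ℝ) ^ (k - 1) * ((n - 1).choose (k - 1) : ℝ)) := by
    intro k hk
    simp only [Finset.mem_Ico] at hk
    obtain ⟨k, rfl⟩ : ∃ j, k = j + 1 := ⟨k - 1, by omega⟩
    obtain ⟨m, rfl⟩ : ∃ j, n = j + 1 := ⟨n - 1, by omega⟩
    have := Nat.add_one_mul_choose_eq m k
    have hc : ((m + 1 : ℕ) : ℝ) * (m.choose k : ℝ) = ((m + 1).choose (k + 1) : ℝ) * ((k + 1 : ℕ) : ℝ) := by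
      exact_mod_cast congrArg (Nat.cast : ℕ → ℝ) this
    simp only [Nat.add_sub_cancel]
    push_cast at hc ⊢
    rw [pow_succ]
    linear_combination ((-1 : ℝ) ^ k) * hc
  rw [Finset.sum_congr rfl key, ← Finset.mul_sum]
  have reidx : ∑ k ∈ Finset.Ico r (n + 1), (-1 : ℝ) ^ (k - 1) * ((n - 1).choose (k - 1) : ℝ)
      = ∑ j ∈ Finset.Ico (r - 1) n, (-1 : ℝ) ^ j * ((n - 1).choose j : ℝ) := by
    rw [Finset.sum_Ico_eq_sum_range, Finset.sum_Ico_eq_sum_range]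
    have hlen : n + 1 - r = n - (r - 1) := by omega
    rw [hlen]
    refine Finset.sum_congr rfl fun i _ => ?_
    have : r + i - 1 = r - 1 + i := by omega
    rw [this]
  rw [reidx]
  have : n = (n - 1) + 1 := by omega
  rw [show Finset.Ico (r - 1) n = Finset.Ico (r - 1) ((n - 1) + 1) by rw [← this]]
  rw [I1 (n - 1) (r - 1) (by omega) (by omega) (by omega)]
  have h3 : n - 1 - 1 = n - 2 := by omega
  have h4 : r - 1 - 1 = r - 2 := by omega
  rw [h3, h4]
  have hr : (-1 : ℝ) ^ r = -(-1 : ℝ) ^ (r - 1) := by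
    obtain ⟨j, rfl⟩ : ∃ j, r = j + 1 := ⟨r - 1, by omega⟩
    simp [pow_succ]
  rw [hr]; ring

lemma neg_one_pow_sub' (d k : ℕ) (h : k ≤ d) : (-1 : ℝ) ^ (d - k) = (-1) ^ d * (-1) ^ k := by
  have h1 : (-1 : ℝ) ^ d = (-1) ^ (d - k) * (-1) ^ k := by
    rw [← pow_add, Nat.sub_add_cancel h]
  have h2 : ((-1 : ℝ) ^ k) * ((-1) ^ k) = 1 := by
    rw [← pow_add]; exact Even.neg_one_pow ⟨k, rfl⟩
  calc (-1 : ℝ) ^ (d - k) = (-1) ^ (d - k) * ((-1) ^ k * (-1) ^ k) := by rw [h2, mul_one]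
    _ = (-1) ^ d * (-1) ^ k := by rw [← mul_assoc, ← h1, mul_comm]

lemma Δ_even_abs (m : ℕ) (hm : 2 ≤ m) :
    |Δa (2 * m) 0 0 ReLU| = 4 / 2 ^ (2 * m) * (((2 * m - 3).choose (m - 1) : ℕ) : ℝ) := by
  rw [group]
  have hsplit : Finset.range (2 * m + 1) =
      Finset.Ico 0 (m + 1) ∪ Finset.Ico (m + 1) (2 * m + 1) := by
    rw [Finset.range_eq_Ico]
    exact (Finset.Ico_union_Ico_eq_Ico (Nat.zero_le _) (by omega)).symm
  have hdisj : Disjoint (Finset.Ico 0 (m + 1)) (Finset.Ico (m + 1) (2 * m + 1)) :=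
    Finset.Ico_disjoint_Ico_consecutive 0 (m + 1) (2 * m + 1)
  rw [hsplit, Finset.sum_union hdisj]
  have hzero : ∑ k ∈ Finset.Ico 0 (m + 1),
      (-1 : ℝ) ^ (2 * m - k) * (((2 * m).choose k : ℕ) : ℝ) * ReLU (2 * (k : ℝ) - ((2 * m : ℕ) : ℝ) + 0) = 0 := by
    apply Finset.sum_eq_zero
    intro k hk
    simp only [Finset.mem_Ico] at hk
    have hk' : (k : ℝ) ≤ m := by exact_mod_cast Nat.lt_succ_iff.mp hk.2
    have : ReLU (2 * (k : ℝ) - ((2 * m : ℕ) : ℝ) + 0) = 0 := by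
      have hle : 2 * (k : ℝ) - ((2 * m : ℕ) : ℝ) + 0 ≤ 0 := by push_cast; linarith
      exact max_eq_left hle
    rw [this, mul_zero]
  rw [hzero, zero_add]
  have hmain : ∑ k ∈ Finset.Ico (m + 1) (2 * m + 1),
      (-1 : ℝ) ^ (2 * m - k) * (((2 * m).choose k : ℕ) : ℝ) * ReLU (2 * (k : ℝ) - ((2 * m : ℕ) : ℝ) + 0)
        = (-1 : ℝ) ^ (m + 1) * (2 * (((2 * m - 2).choose (m - 1) : ℕ) : ℝ)) := by
    have hcong : ∀ k ∈ Finset.Ico (m + 1) (2 * m + 1),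
        (-1 : ℝ) ^ (2 * m - k) * (((2 * m).choose k : ℕ) : ℝ) * ReLU (2 * (k : ℝ) - ((2 * m : ℕ) : ℝ) + 0)
          = 2 * ((-1 : ℝ) ^ k * (k : ℝ) * (((2 * m).choose k : ℕ) : ℝ))
            - (2 * (m : ℝ)) * ((-1 : ℝ) ^ k * (((2 * m).choose k : ℕ) : ℝ)) := by
      intro k hk
      simp only [Finset.mem_Ico] at hk
      rw [neg_one_pow_sub' (2 * m) k (by omega)]
      have heven : (-1 : ℝ) ^ (2 * m) = 1 := Even.neg_one_pow ⟨m, by ring⟩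
      rw [heven, one_mul]
      have hk1 : (m : ℝ) + 1 ≤ k := by exact_mod_cast hk.1
      have hrelu : ReLU (2 * (k : ℝ) - ((2 * m : ℕ) : ℝ) + 0) = 2 * (k : ℝ) - 2 * m := by
        have hge : (0 : ℝ) ≤ 2 * (k : ℝ) - ((2 * m : ℕ) : ℝ) + 0 := by push_cast; linarith
        unfold ReLU
        exact (max_eq_right hge).trans (by push_cast; ring)
      rw [hrelu]
      ring
    rw [Finset.sum_congr rfl hcong, Finset.sum_sub_distrib, ← Finset.mul_sum, ← Finset.mul_sum]
    have h2m1 : Finset.Ico (m + 1) (2 * m + 1) = Finset.Ico (m + 1) (2 * m + 1) := rfl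
    rw [I2 (2 * m) (m + 1) (by omega) (by omega) (by omega),
        I1 (2 * m) (m + 1) (by omega) (by omega) (by omega)]
    have h3 : 2 * m - 2 = 2 * (m - 1) := by omega
    have h4 : m + 1 - 2 = m - 1 := by omega
    have h5 : 2 * m - 1 = 2 * m - 1 := rfl
    rw [h4, Nat.add_sub_cancel]
    have hfact : (m : ℝ) * (((2 * m - 1).choose m : ℕ) : ℝ)
        = ((2 * m - 1 : ℕ) : ℝ) * (((2 * m - 2).choose (m - 1) : ℕ) : ℝ) := by
      obtain ⟨j, rfl⟩ : ∃ j, m = j + 2 := ⟨m - 2, by omega⟩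
      have e1 : 2 * (j + 2) - 1 = 2 * j + 3 := by omega
      have e2 : 2 * (j + 2) - 2 = 2 * j + 2 := by omega
      have e3 : j + 2 - 1 = j + 1 := by omega
      rw [e1, e2, e3]
      have := Nat.add_one_mul_choose_eq (2 * j + 2) (j + 1)
      have hcast : ((2 * j + 3 : ℕ) : ℝ) * (((2 * j + 2).choose (j + 1) : ℕ) : ℝ)
          = (((2 * j + 3).choose (j + 2) : ℕ) : ℝ) * ((j + 2 : ℕ) : ℝ) := by
        exact_mod_cast congrArg (Nat.cast : ℕ → ℝ) this
      push_cast at hcast ⊢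
      linarith
    have hm1 : ((2 * m - 1 : ℕ) : ℝ) = 2 * (m : ℝ) - 1 := by
      push_cast [Nat.cast_sub (by omega : 1 ≤ 2 * m)]; ring
    rw [hm1] at hfact
    push_cast
    linear_combination (-2 * (-1 : ℝ) ^ (m + 1)) * hfact
  rw [hmain]
  rw [abs_div, abs_mul, abs_pow, abs_neg, abs_one, one_pow, one_mul]
  have hchoose : ((2 * m - 2).choose (m - 1) : ℕ) = 2 * ((2 * m - 3).choose (m - 1) : ℕ) := by
    obtain ⟨j, rfl⟩ : ∃ j, m = j + 2 := ⟨m - 2, by omega⟩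
    have e1 : 2 * (j + 2) - 2 = 2 * j + 2 := by omega
    have e2 : 2 * (j + 2) - 3 = 2 * j + 1 := by omega
    have e3 : j + 2 - 1 = j + 1 := by omega
    rw [e1, e2, e3]
    rw [Nat.choose_succ_succ' (2 * j + 1) j]
    have : (2 * j + 1).choose j = (2 * j + 1).choose (j + 1) := by
      have := Nat.choose_symm (n := 2 * j + 1) (k := j + 1) (by omega)
      have h : 2 * j + 1 - (j + 1) = j := by omega
      rw [h] at this
      exact this
    omega
  rw [hchoose]
  have hpos : |(2 : ℝ) ^ (2 * m)| = 2 ^ (2 * m) := abs_of_pos (by positivity)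
  rw [hpos]
  have : |2 * (((2 * ((2 * m - 3).choose (m - 1)) : ℕ) : ℝ))| = 4 * (((2 * m - 3).choose (m - 1) : ℕ) : ℝ) := by
    rw [abs_of_nonneg (by positivity)]
    push_cast; ring
  rw [this]
  ring

lemma Δ_odd_abs (m : ℕ) (hm : 2 ≤ m) :
    |Δa (2 * m + 1) 0 (-1) ReLU|
      = 1 / 2 ^ (2 * m + 1) * (((2 * m).choose m : ℕ) : ℝ) := by
  rw [group]
  have hsplit : Finset.range (2 * m + 1 + 1) =
      Finset.Ico 0 (m + 2) ∪ Finset.Ico (m + 2) (2 * m + 2) := by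
    rw [Finset.range_eq_Ico]
    exact (Finset.Ico_union_Ico_eq_Ico (Nat.zero_le _) (by omega)).symm
  have hdisj : Disjoint (Finset.Ico 0 (m + 2)) (Finset.Ico (m + 2) (2 * m + 2)) :=
    Finset.Ico_disjoint_Ico_consecutive 0 (m + 2) (2 * m + 2)
  rw [hsplit, Finset.sum_union hdisj]
  have hzero : ∑ k ∈ Finset.Ico 0 (m + 2),
      (-1 : ℝ) ^ (2 * m + 1 - k) * (((2 * m + 1).choose k : ℕ) : ℝ)
        * ReLU (2 * (k : ℝ) - ((2 * m + 1 : ℕ) : ℝ) + (-1)) = 0 := by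
    apply Finset.sum_eq_zero
    intro k hk
    simp only [Finset.mem_Ico] at hk
    have hk' : (k : ℝ) ≤ m + 1 := by exact_mod_cast Nat.lt_succ_iff.mp hk.2
    have : ReLU (2 * (k : ℝ) - ((2 * m + 1 : ℕ) : ℝ) + (-1)) = 0 := by
      have hle : 2 * (k : ℝ) - ((2 * m + 1 : ℕ) : ℝ) + (-1) ≤ 0 := by push_cast; linarith
      exact max_eq_left hle
    rw [this, mul_zero]
  rw [hzero, zero_add]
  have hmain : ∑ k ∈ Finset.Ico (m + 2) (2 * m + 2),
      (-1 : ℝ) ^ (2 * m + 1 - k) * (((2 * m + 1).choose k : ℕ) : ℝ)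
        * ReLU (2 * (k : ℝ) - ((2 * m + 1 : ℕ) : ℝ) + (-1))
        = -((-1 : ℝ) ^ (m + 2) * (2 * (((2 * m - 1).choose m : ℕ) : ℝ))) := by
    have hcong : ∀ k ∈ Finset.Ico (m + 2) (2 * m + 2),
        (-1 : ℝ) ^ (2 * m + 1 - k) * (((2 * m + 1).choose k : ℕ) : ℝ)
          * ReLU (2 * (k : ℝ) - ((2 * m + 1 : ℕ) : ℝ) + (-1))
          = (2 * (m : ℝ) + 2) * ((-1 : ℝ) ^ k * (((2 * m + 1).choose k : ℕ) : ℝ))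
            - 2 * ((-1 : ℝ) ^ k * (k : ℝ) * (((2 * m + 1).choose k : ℕ) : ℝ)) := by
      intro k hk
      simp only [Finset.mem_Ico] at hk
      rw [neg_one_pow_sub' (2 * m + 1) k (by omega)]
      have hodd : (-1 : ℝ) ^ (2 * m + 1) = -1 := Odd.neg_one_pow ⟨m, by ring⟩
      rw [hodd]
      have hk1 : (m : ℝ) + 2 ≤ k := by exact_mod_cast hk.1
      have hrelu : ReLU (2 * (k : ℝ) - ((2 * m + 1 : ℕ) : ℝ) + (-1))
          = 2 * (k : ℝ) - 2 * m - 2 := by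
        have hge : (0 : ℝ) ≤ 2 * (k : ℝ) - ((2 * m + 1 : ℕ) : ℝ) + (-1) := by push_cast; linarith
        unfold ReLU
        exact (max_eq_right hge).trans (by push_cast; ring)
      rw [hrelu]
      ring
    rw [Finset.sum_congr rfl hcong, Finset.sum_sub_distrib, ← Finset.mul_sum, ← Finset.mul_sum]
    have e1 : 2 * m + 2 = (2 * m + 1) + 1 := by omega
    rw [show Finset.Ico (m + 2) (2 * m + 2) = Finset.Ico (m + 2) ((2 * m + 1) + 1) from by rw [← e1]]
    rw [I2 (2 * m + 1) (m + 2) (by omega) (by omega) (by omega),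
        I1 (2 * m + 1) (m + 2) (by omega) (by omega) (by omega)]
    have h3 : 2 * m + 1 - 1 = 2 * m := by omega
    have h4 : m + 2 - 1 = m + 1 := by omega
    have h5 : 2 * m + 1 - 2 = 2 * m - 1 := by omega
    have h6 : m + 2 - 2 = m := by omega
    rw [h3, h4, h5, h6]
    have hfact : 2 * (m : ℝ) * (((2 * m - 1).choose m : ℕ) : ℝ)
        = ((m : ℝ) + 1) * (((2 * m).choose (m + 1) : ℕ) : ℝ) := by
      obtain ⟨j, rfl⟩ : ∃ j, m = j + 2 := ⟨m - 2, by omega⟩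
      have e2 : 2 * (j + 2) - 1 = 2 * j + 3 := by omega
      have e3 : 2 * (j + 2) = 2 * j + 4 := by omega
      rw [e2, e3]
      have := Nat.add_one_mul_choose_eq (2 * j + 3) (j + 2)
      have hcast : ((2 * j + 4 : ℕ) : ℝ) * (((2 * j + 3).choose (j + 2) : ℕ) : ℝ)
          = (((2 * j + 4).choose (j + 3) : ℕ) : ℝ) * ((j + 3 : ℕ) : ℝ) := by
        exact_mod_cast congrArg (Nat.cast : ℕ → ℝ) this
      push_cast at hcast ⊢
      linarith
    push_cast
    linear_combination (-2 * (-1 : ℝ) ^ m) * hfact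
  rw [hmain]
  rw [abs_div, abs_neg, abs_mul, abs_pow, abs_neg, abs_one, one_pow, one_mul]
  have hchoose : ((2 * m).choose m : ℕ) = 2 * ((2 * m - 1).choose m : ℕ) := by
    obtain ⟨j, rfl⟩ : ∃ j, m = j + 2 := ⟨m - 2, by omega⟩
    have e2 : 2 * (j + 2) - 1 = 2 * j + 3 := by omega
    have e3 : 2 * (j + 2) = 2 * j + 4 := by omega
    rw [e2, e3]
    have hp : (2 * j + 4).choose (j + 2) = (2 * j + 3).choose (j + 1) + (2 * j + 3).choose (j + 2) := by
      exact Nat.choose_succ_succ' (2 * j + 3) (j + 1)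
    have hs : (2 * j + 3).choose (j + 1) = (2 * j + 3).choose (j + 2) := by
      have := Nat.choose_symm (n := 2 * j + 3) (k := j + 2) (by omega)
      have h : 2 * j + 3 - (j + 2) = j + 1 := by omega
      rw [h] at this
      exact this
    omega
  rw [hchoose]
  have hpos : |(2 : ℝ) ^ (2 * m + 1)| = 2 ^ (2 * m + 1) := abs_of_pos (by positivity)
  rw [hpos]
  have : |2 * (((2 * m - 1).choose m : ℕ) : ℝ)| = 2 * (((2 * m - 1).choose m : ℕ) : ℝ) :=
    abs_of_nonneg (by positivity)
  rw [this]
  push_cast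
  ring

lemma cb_rec (n : ℕ) : ((n : ℝ) + 1) * (Nat.centralBinom (n + 1) : ℝ)
    = 2 * (2 * (n : ℝ) + 1) * (Nat.centralBinom n : ℝ) := by
  have h : (((n + 1) * Nat.centralBinom (n + 1) : ℕ) : ℝ)
      = ((2 * (2 * n + 1) * Nat.centralBinom n : ℕ) : ℝ) := by
    rw [Nat.succ_mul_centralBinom_succ n]
  push_cast at h
  linarith

lemma cb_rec2 (n : ℕ) : ((n : ℝ) + 1) ^ 2 * (Nat.centralBinom (n + 1) : ℝ) ^ 2
    = 4 * (2 * (n : ℝ) + 1) ^ 2 * (Nat.centralBinom n : ℝ) ^ 2 := by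
  have h := cb_rec n
  linear_combination (((n : ℝ) + 1) * (Nat.centralBinom (n + 1) : ℝ)
    + 2 * (2 * (n : ℝ) + 1) * (Nat.centralBinom n : ℝ)) * h

lemma cb_sq_lb : ∀ n : ℕ, 1 ≤ n → (16 : ℝ) ^ n ≤ 4 * (n : ℝ) * (Nat.centralBinom n : ℝ) ^ 2 := by
  intro n
  induction n with
  | zero => intro h; omega
  | succ n IH =>
    intro _
    rcases Nat.eq_zero_or_pos n with rfl | hn
    · norm_num [Nat.centralBinom]
    have ih := IH hn
    have hrec2 := cb_rec2 n
    have hn1 : (0 : ℝ) < (n : ℝ) + 1 := by positivity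
    have hcb : (0 : ℝ) ≤ (Nat.centralBinom n : ℝ) ^ 2 := sq_nonneg _
    have key : (16 : ℝ) ^ n * 16 * ((n : ℝ) + 1)
        ≤ 4 * ((n : ℝ) + 1) * (Nat.centralBinom (n + 1) : ℝ) ^ 2 * ((n : ℝ) + 1) := by
      have h1 : (16 : ℝ) ^ n * 16 * ((n : ℝ) + 1)
          ≤ 4 * (n : ℝ) * (Nat.centralBinom n : ℝ) ^ 2 * 16 * ((n : ℝ) + 1) := by
        nlinarith [ih, hn1]
      have h2 : 4 * (n : ℝ) * (Nat.centralBinom n : ℝ) ^ 2 * 16 * ((n : ℝ) + 1)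
          ≤ 16 * (2 * (n : ℝ) + 1) ^ 2 * (Nat.centralBinom n : ℝ) ^ 2 := by
        nlinarith [hcb, Nat.cast_nonneg (α := ℝ) n]
      have h3 : 4 * ((n : ℝ) + 1) * (Nat.centralBinom (n + 1) : ℝ) ^ 2 * ((n : ℝ) + 1)
          = 16 * (2 * (n : ℝ) + 1) ^ 2 * (Nat.centralBinom n : ℝ) ^ 2 := by
        linear_combination 4 * hrec2
      linarith
    have := le_of_mul_le_mul_right key hn1
    push_cast
    rw [pow_succ (16 : ℝ) n]
    linarith

lemma cb_sq_ub : ∀ n : ℕ, 1 ≤ n →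
    (Nat.centralBinom n : ℝ) ^ 2 * (3 * (n : ℝ) + 1) ≤ (16 : ℝ) ^ n := by
  intro n
  induction n with
  | zero => intro h; omega
  | succ n IH =>
    intro _
    rcases Nat.eq_zero_or_pos n with rfl | hn
    · norm_num [Nat.centralBinom]
    have ih := IH hn
    have hrec2 := cb_rec2 n
    have hn1 : (0 : ℝ) < ((n : ℝ) + 1) ^ 2 := by positivity
    have hcb : (0 : ℝ) ≤ (Nat.centralBinom n : ℝ) ^ 2 := sq_nonneg _
    have hnn : (0 : ℝ) ≤ (n : ℝ) := Nat.cast_nonneg n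
    have key : (Nat.centralBinom (n + 1) : ℝ) ^ 2 * (3 * ((n : ℝ) + 1) + 1) * ((n : ℝ) + 1) ^ 2
        ≤ (16 : ℝ) ^ n * 16 * ((n : ℝ) + 1) ^ 2 := by
      have h3 : (Nat.centralBinom (n + 1) : ℝ) ^ 2 * (3 * ((n : ℝ) + 1) + 1) * ((n : ℝ) + 1) ^ 2
          = 4 * (2 * (n : ℝ) + 1) ^ 2 * (Nat.centralBinom n : ℝ) ^ 2 * (3 * (n : ℝ) + 4) := by
        linear_combination (3 * (n : ℝ) + 4) * hrec2
      have h2 : 4 * (2 * (n : ℝ) + 1) ^ 2 * (Nat.centralBinom n : ℝ) ^ 2 * (3 * (n : ℝ) + 4)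
          ≤ 16 * ((n : ℝ) + 1) ^ 2 * ((Nat.centralBinom n : ℝ) ^ 2 * (3 * (n : ℝ) + 1)) := by
        nlinarith [hcb, hnn, mul_nonneg hcb hnn]
      have h1 : 16 * ((n : ℝ) + 1) ^ 2 * ((Nat.centralBinom n : ℝ) ^ 2 * (3 * (n : ℝ) + 1))
          ≤ 16 * ((n : ℝ) + 1) ^ 2 * (16 : ℝ) ^ n := by
        nlinarith [ih, hn1]
      rw [h3]
      calc 4 * (2 * (n : ℝ) + 1) ^ 2 * (Nat.centralBinom n : ℝ) ^ 2 * (3 * (n : ℝ) + 4)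
          ≤ 16 * ((n : ℝ) + 1) ^ 2 * ((Nat.centralBinom n : ℝ) ^ 2 * (3 * (n : ℝ) + 1)) := h2
        _ ≤ 16 * ((n : ℝ) + 1) ^ 2 * (16 : ℝ) ^ n := h1
        _ = (16 : ℝ) ^ n * 16 * ((n : ℝ) + 1) ^ 2 := by ring
    have := le_of_mul_le_mul_right key hn1
    push_cast
    rw [pow_succ (16 : ℝ) n]
    linarith

lemma cb_lb (n : ℕ) (hn : 1 ≤ n) :
    (4 : ℝ) ^ n / (2 * Real.sqrt n) ≤ (Nat.centralBinom n : ℝ) := by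
  have hnp : (0 : ℝ) < n := by exact_mod_cast hn
  have hsn : 0 < Real.sqrt n := Real.sqrt_pos.mpr hnp
  have h := cb_sq_lb n hn
  have key : ((4 : ℝ) ^ n) ^ 2 ≤ (2 * Real.sqrt n * (Nat.centralBinom n : ℝ)) ^ 2 := by
    have e : (2 * Real.sqrt n * (Nat.centralBinom n : ℝ)) ^ 2
        = 4 * (n : ℝ) * (Nat.centralBinom n : ℝ) ^ 2 := by
      rw [mul_pow, mul_pow, Real.sq_sqrt (Nat.cast_nonneg n)]; ring
    have e2 : ((4 : ℝ) ^ n) ^ 2 = 16 ^ n := by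
      rw [← pow_mul, mul_comm, pow_mul]; norm_num
    rw [e, e2]; exact h
  have h2 := Real.sqrt_le_sqrt key
  rw [Real.sqrt_sq (by positivity), Real.sqrt_sq (by positivity)] at h2
  rw [div_le_iff₀ (by positivity)]
  nlinarith [h2]

lemma cb_ub (n : ℕ) (hn : 1 ≤ n) :
    (Nat.centralBinom n : ℝ) ≤ (4 : ℝ) ^ n / Real.sqrt n := by
  have hnp : (0 : ℝ) < n := by exact_mod_cast hn
  have hsn : 0 < Real.sqrt n := Real.sqrt_pos.mpr hnp
  have h := cb_sq_ub n hn
  have key : ((Nat.centralBinom n : ℝ) * Real.sqrt n) ^ 2 ≤ ((4 : ℝ) ^ n) ^ 2 := by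
    have e : ((Nat.centralBinom n : ℝ) * Real.sqrt n) ^ 2
        = (Nat.centralBinom n : ℝ) ^ 2 * (n : ℝ) := by
      rw [mul_pow, Real.sq_sqrt (Nat.cast_nonneg n)]
    have e2 : ((4 : ℝ) ^ n) ^ 2 = 16 ^ n := by
      rw [← pow_mul, mul_comm, pow_mul]; norm_num
    rw [e, e2]
    nlinarith [sq_nonneg (Nat.centralBinom n : ℝ), hnp]
  have h2 := Real.sqrt_le_sqrt key
  rw [Real.sqrt_sq (by positivity), Real.sqrt_sq (by positivity)] at h2
  rw [le_div_iff₀ hsn]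
  exact h2

lemma final_bounds (n d : ℕ) (hn : 1 ≤ n) (hnd : n ≤ d) (hd4 : d ≤ 4 * n) (X : ℝ)
    (hX : X = (Nat.centralBinom n : ℝ) / (2 * 4 ^ n)) :
    (1 / 4 : ℝ) / Real.sqrt d ≤ X ∧ X ≤ 1 / Real.sqrt d := by
  have hnp : (0 : ℝ) < n := by exact_mod_cast hn
  have hdp : (0 : ℝ) < d := by exact_mod_cast hn.trans hnd
  have hsn : 0 < Real.sqrt n := Real.sqrt_pos.mpr hnp
  have hsd : 0 < Real.sqrt d := Real.sqrt_pos.mpr hdp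
  have hmono : Real.sqrt n ≤ Real.sqrt d := Real.sqrt_le_sqrt (by exact_mod_cast hnd)
  have hd2n : Real.sqrt d ≤ 2 * Real.sqrt n := by
    have h4 : Real.sqrt 4 = 2 := by
      rw [show (4 : ℝ) = 2 ^ 2 by norm_num, Real.sqrt_sq (by norm_num)]
    calc Real.sqrt d ≤ Real.sqrt (4 * n) := Real.sqrt_le_sqrt (by push_cast; exact_mod_cast hd4)
      _ = Real.sqrt 4 * Real.sqrt n := Real.sqrt_mul (by norm_num) _
      _ = 2 * Real.sqrt n := by rw [h4]
  have hlb := cb_lb n hn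
  have hub := cb_ub n hn
  constructor
  · calc (1 / 4 : ℝ) / Real.sqrt d ≤ (1 / 4 : ℝ) / Real.sqrt n := by gcongr
      _ = ((4 : ℝ) ^ n / (2 * Real.sqrt n)) / (2 * 4 ^ n) := by
          field_simp; ring
      _ ≤ X := by rw [hX]; gcongr
  · calc X = (Nat.centralBinom n : ℝ) / (2 * 4 ^ n) := hX
      _ ≤ ((4 : ℝ) ^ n / Real.sqrt n) / (2 * 4 ^ n) := by gcongr
      _ = 1 / (2 * Real.sqrt n) := by field_simp
      _ ≤ 1 / Real.sqrt d := by gcongr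

lemma cb_double (n : ℕ) (hn : 1 ≤ n) :
    Nat.centralBinom n = 2 * (2 * n - 1).choose n := by
  obtain ⟨j, rfl⟩ : ∃ j, n = j + 1 := ⟨n - 1, by omega⟩
  unfold Nat.centralBinom
  have e1 : 2 * (j + 1) = 2 * j + 2 := by omega
  rw [e1]
  rw [show 2 * j + 2 - 1 = 2 * j + 1 from by omega]
  have hp : (2 * j + 2).choose (j + 1) = (2 * j + 1).choose j + (2 * j + 1).choose (j + 1) :=
    Nat.choose_succ_succ' (2 * j + 1) j
  have hs : (2 * j + 1).choose j = (2 * j + 1).choose (j + 1) := by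
    have := Nat.choose_symm (n := 2 * j + 1) (k := j + 1) (by omega)
    have h : 2 * j + 1 - (j + 1) = j := by omega
    rw [h] at this
    exact this
  omega

/-- exact value of `|Δ_{d,0,ReLU}|` (`d` even) and `|Δ_{d,−1,ReLU}|` (`d` odd)
for `d ≥ 4`, and the consequent two-sided bound of order `1/√d`.
Here `Δ_{d,b,σ} = Δ^{(0)}_{d,b,σ}`. -/
theorem stmt_2 :
    (∀ d : ℕ, 4 ≤ d → Even d →
      |Δa d 0 0 ReLU| = 4 / 2 ^ d * ((d - 3).choose (d / 2 - 1) : ℝ)) ∧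
    (∀ d : ℕ, 4 ≤ d → Odd d →
      |Δa d 0 (-1) ReLU| = 1 / 2 ^ d * ((d - 1).choose ((d - 1) / 2) : ℝ)) ∧
    (∃ c c' : ℝ, 0 < c ∧ c ≤ c' ∧ ∀ d : ℕ, 4 ≤ d →
      (Even d → c / Real.sqrt d ≤ |Δa d 0 0 ReLU| ∧ |Δa d 0 0 ReLU| ≤ c' / Real.sqrt d) ∧
      (Odd d → c / Real.sqrt d ≤ |Δa d 0 (-1) ReLU| ∧
        |Δa d 0 (-1) ReLU| ≤ c' / Real.sqrt d)) := by
  refine ⟨?_, ?_, ?_⟩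
  · intro d hd hev
    obtain ⟨m, rfl⟩ := hev
    have hm : 2 ≤ m := by omega
    rw [show m + m = 2 * m from by ring]
    rw [show 2 * m / 2 - 1 = m - 1 from by omega]
    exact Δ_even_abs m hm
  · intro d hd hodd
    obtain ⟨m, rfl⟩ := hodd
    have hm : 2 ≤ m := by omega
    rw [show 2 * m + 1 - 1 = 2 * m from by omega, show 2 * m / 2 = m from by omega]
    exact Δ_odd_abs m hm
  · refine ⟨1 / 4, 1, by norm_num, by norm_num, ?_⟩
    intro d hd
    constructor
    · intro hev
      obtain ⟨m, rfl⟩ := hev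
      obtain ⟨n, rfl⟩ : ∃ n, m = n + 1 := ⟨m - 1, by omega⟩
      have hn : 1 ≤ n := by omega
      rw [show (n + 1) + (n + 1) = 2 * (n + 1) from by ring]
      have hval := Δ_even_abs (n + 1) (by omega)
      rw [show 2 * (n + 1) - 3 = 2 * n - 1 from by omega, Nat.add_sub_cancel] at hval
      have hX : |Δa (2 * (n + 1)) 0 0 ReLU| = (Nat.centralBinom n : ℝ) / (2 * 4 ^ n) := by
        have hcd : (Nat.centralBinom n : ℝ) = 2 * (((2 * n - 1).choose n : ℕ) : ℝ) := by
          exact_mod_cast cb_double n hn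
        have hpow : (2 : ℝ) ^ (2 * (n + 1)) = 4 ^ n * 4 := by
          rw [pow_mul]
          norm_num [pow_succ]
        rw [hval, hcd, hpow]
        have h4 : (4 : ℝ) ^ n ≠ 0 := by positivity
        field_simp
      exact final_bounds n (2 * (n + 1)) hn (by omega) (by omega) _ hX
    · intro hodd
      obtain ⟨m, rfl⟩ := hodd
      have hm : 2 ≤ m := by omega
      have hval := Δ_odd_abs m hm
      have hX : |Δa (2 * m + 1) 0 (-1) ReLU| = (Nat.centralBinom m : ℝ) / (2 * 4 ^ m) := by
        have hcb : (Nat.centralBinom m : ℝ) = (((2 * m).choose m : ℕ) : ℝ) := by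
          unfold Nat.centralBinom; norm_num
        have hpow : (2 : ℝ) ^ (2 * m + 1) = 2 * 4 ^ m := by
          rw [pow_succ, pow_mul]
          norm_num
          ring
        rw [hval, hcb, hpow]
        ring
      exact final_bounds m (2 * m + 1) (by omega) (by omega) (by omega) _ hX
end

section
/- Let d, n ∈ ℕ, a ∈ ℕ with a ≤ d, σ : ℝ → ℝ, and fix a bias b ∈ ℝ with Δ := |Δ^{(a)}_{d,b,σ}| > 0 and |σ(w·x + b)| ≤ R for all w, x ∈ {±1}^d. There is an absolute constant c₁ > 0 such that if n ≥ c₁ d R²/Δ², then with probability at least 1 − e^{−d} over i.i.d. rows w_i ∼ Unif({±1}^d), the unit vector v* ∈ ℝ^n defined by v*_i := sign(Δ^{(a)}_{d,b,σ}) · (∏_{j=1}^{d−a} w_{ij}) / √n (so |v*_i| = 1/√n for every i and ‖v*‖₂ = 1) satisfies, simultaneously for every x ∈ {±1}^d: f_a(x) · ∑_{i=1}^n v*_i σ(w_i·x + b) ≥ √n Δ / 2. In particular the hidden-layer embedding x ↦ (σ(w_i·x+b))_{i≤n} makes the (d−a)-parity linearly separable with margin √n Δ/2. -/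
open MeasureTheory ProbabilityTheory NNReal

/-- The uniform probability measure on `{±1}^d`. -/
noncomputable def unifPM (d : ℕ) : Measure (Fin d → Bool) :=
  (PMF.uniformOfFintype (Fin d → Bool)).toMeasure

/-! ### Auxiliary lemmas -/

lemma pm_mul_self (b : Bool) : pm b * pm b = 1 := by cases b <;> norm_num [pm]
lemma abs_pm (b : Bool) : |pm b| = 1 := by cases b <;> norm_num [pm]
lemma pm_beq (u v : Bool) : pm (u == v) = pm u * pm v := by
  cases u <;> cases v <;> norm_num [pm]

lemma abs_parityF (d a : ℕ) (x : Fin d → Bool) : |parityF d a x| = 1 := by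
  rw [parityF, Finset.abs_prod]
  exact Finset.prod_eq_one fun j _ => abs_pm _

lemma exp_quad {u : ℝ} (hu : |u| ≤ 1) : Real.exp u ≤ 1 + u + (3/4) * u ^ 2 := by
  have h := Real.exp_bound hu (n := 2) (by norm_num)
  have h2 : ∑ m ∈ Finset.range 2, u ^ m / m.factorial = 1 + u := by
    simp [Finset.sum_range_succ]
  rw [h2] at h
  have := (abs_sub_le_iff.1 h).1
  have habs : |u| ^ 2 = u ^ 2 := sq_abs u
  norm_num [habs] at this ⊢
  linarith

/-- Change of variables: averaging against a shifted parity recovers `Δa`. -/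
lemma sum_shift (d a : ℕ) (σ : ℝ → ℝ) (b : ℝ) (x : Fin d → Bool) :
    ∑ w : Fin d → Bool, parityF d a w * parityF d a x * σ (dotB w x + b)
      = 2 ^ d * Δa d a b σ := by
  have hinv : Function.Involutive (fun (w : Fin d → Bool) => (fun j => w j == x j)) := by
    intro w; funext j; simp only []; cases w j <;> cases x j <;> rfl
  have hterm : ∀ w : Fin d → Bool,
      parityF d a w * parityF d a x * σ (dotB w x + b)
        = parityF d a (fun j => w j == x j)
            * σ ((∑ j, pm ((fun j => w j == x j) j)) + b) := by
    intro w
    have h1 : parityF d a (fun j => w j == x j) = parityF d a w * parityF d a x := by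
      rw [parityF, parityF, parityF, ← Finset.prod_mul_distrib]
      exact Finset.prod_congr rfl fun j _ => pm_beq _ _
    have h2 : (∑ j, pm ((fun j => w j == x j) j)) = dotB w x := by
      rw [dotB]; exact Finset.sum_congr rfl fun j _ => pm_beq _ _
    rw [h1, h2]
  calc ∑ w : Fin d → Bool, parityF d a w * parityF d a x * σ (dotB w x + b)
      = ∑ w : Fin d → Bool, parityF d a (fun j => w j == x j)
            * σ ((∑ j, pm ((fun j => w j == x j) j)) + b) :=
        Finset.sum_congr rfl fun w _ => hterm w
    _ = ∑ u : Fin d → Bool, parityF d a u * σ ((∑ j, pm (u j)) + b) :=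
        Fintype.sum_bijective _ hinv.bijective _ _ (fun w => rfl)
    _ = 2 ^ d * Δa d a b σ := by
        rw [Δa, Eunif]
        field_simp

/-- The single-neuron random variable whose mean is `|Δa|`. -/
noncomputable def eta (d a : ℕ) (b : ℝ) (σ : ℝ → ℝ) (x v : Fin d → Bool) : ℝ :=
  Real.sign (Δa d a b σ) * (parityF d a v * parityF d a x) * σ (dotB v x + b)

lemma abs_sign_le (r : ℝ) : |Real.sign r| ≤ 1 := by
  rcases Real.sign_apply_eq r with h | h | h <;> rw [h] <;> norm_num

lemma realSign_mul_self {r : ℝ} (h : r ≠ 0) : Real.sign r * r = |r| := by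
  rcases lt_or_gt_of_ne h with h' | h'
  · rw [Real.sign_of_neg h', abs_of_neg h']; ring
  · rw [Real.sign_of_pos h', abs_of_pos h']; ring

lemma abs_eta_le {d a : ℕ} {b R : ℝ} {σ : ℝ → ℝ}
    (hσ : ∀ w x : Fin d → Bool, |σ (dotB w x + b)| ≤ R) (x v : Fin d → Bool) :
    |eta d a b σ x v| ≤ R := by
  rw [eta, abs_mul, abs_mul, abs_mul, abs_parityF, abs_parityF]
  have h1 := abs_sign_le (Δa d a b σ)
  have h2 := hσ v x
  have h3 := abs_nonneg (σ (dotB v x + b))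
  have h4 := abs_nonneg (Real.sign (Δa d a b σ))
  nlinarith

lemma sum_eta {d a : ℕ} {b : ℝ} {σ : ℝ → ℝ} (hΔ : Δa d a b σ ≠ 0) (x : Fin d → Bool) :
    ∑ v : Fin d → Bool, eta d a b σ x v
      = (Fintype.card (Fin d → Bool) : ℝ) * |Δa d a b σ| := by
  have h1 : ∑ v : Fin d → Bool, eta d a b σ x v
      = Real.sign (Δa d a b σ)
        * ∑ v : Fin d → Bool, parityF d a v * parityF d a x * σ (dotB v x + b) := by
    rw [Finset.mul_sum]
    exact Finset.sum_congr rfl fun v _ => by rw [eta]; ring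
  rw [h1, sum_shift, Fintype.card_fun, Fintype.card_bool, Fintype.card_fin]
  push_cast
  rw [show Real.sign (Δa d a b σ) * ((2:ℝ) ^ d * Δa d a b σ)
      = (2:ℝ) ^ d * (Real.sign (Δa d a b σ) * Δa d a b σ) by ring, realSign_mul_self hΔ]

lemma abs_Δa_le {d a : ℕ} {b R : ℝ} {σ : ℝ → ℝ}
    (hσ : ∀ w x : Fin d → Bool, |σ (dotB w x + b)| ≤ R) :
    |Δa d a b σ| ≤ R := by
  have hdot : ∀ x : Fin d → Bool, dotB (fun _ => true) x = ∑ j, pm (x j) := by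
    intro x
    rw [dotB]
    refine Finset.sum_congr rfl fun j _ => ?_
    norm_num [pm]
  rw [Δa, Eunif, abs_div, abs_of_nonneg (by positivity : (0:ℝ) ≤ (2:ℝ) ^ d),
    div_le_iff₀ (by positivity : (0:ℝ) < (2:ℝ) ^ d)]
  calc |∑ x : Fin d → Bool, parityF d a x * σ ((∑ j, pm (x j)) + b)|
      ≤ ∑ x : Fin d → Bool, |parityF d a x * σ ((∑ j, pm (x j)) + b)| :=
        Finset.abs_sum_le_sum_abs _ _
    _ ≤ ∑ _x : Fin d → Bool, R := by
        refine Finset.sum_le_sum fun x _ => ?_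
        rw [abs_mul, abs_parityF, one_mul, ← hdot x]
        exact hσ _ x
    _ = R * 2 ^ d := by
        rw [Finset.sum_const, Finset.card_univ, Fintype.card_fun, Fintype.card_bool,
          Fintype.card_fin, nsmul_eq_mul]
        push_cast
        ring

/-- Chernoff-type counting bound over the discrete cube. -/
lemma chernoff_count {α : Type*} [Fintype α] (n : ℕ) (g : α → ℝ) (R μ t : ℝ)
    (hR : ∀ v, |g v| ≤ R) (hmean : ∑ v, g v = (Fintype.card α : ℝ) * μ)
    (ht : 0 ≤ t) (htR : t * R ≤ 1) (F : Finset (Fin n → α))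
    (hF : ∀ w ∈ F, ∑ i, g (w i) ≤ n * μ / 2) :
    (F.card : ℝ) ≤ (Fintype.card α : ℝ) ^ n
      * Real.exp (n * (-(t * μ) / 2 + (3/4) * (t * R) ^ 2)) := by
  have hexp : ∀ w ∈ F, Real.exp (-(t * (n * μ / 2))) ≤ Real.exp (-t * ∑ i, g (w i)) := by
    intro w hw
    apply Real.exp_le_exp.2
    nlinarith [mul_le_mul_of_nonneg_left (hF w hw) ht]
  have h1 : (F.card : ℝ) * Real.exp (-(t * (n * μ / 2)))
      ≤ ∑ w ∈ F, Real.exp (-t * ∑ i, g (w i)) := by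
    calc (F.card : ℝ) * Real.exp (-(t * (n * μ / 2)))
        = ∑ _w ∈ F, Real.exp (-(t * (n * μ / 2))) := by rw [Finset.sum_const]; ring
      _ ≤ _ := Finset.sum_le_sum hexp
  have h2 : ∑ w ∈ F, Real.exp (-t * ∑ i, g (w i))
      ≤ ∑ w : Fin n → α, Real.exp (-t * ∑ i, g (w i)) :=
    Finset.sum_le_sum_of_subset_of_nonneg (Finset.subset_univ F)
      (fun _ _ _ => (Real.exp_pos _).le)
  have h3 : ∑ w : Fin n → α, Real.exp (-t * ∑ i, g (w i))
      = (∑ v : α, Real.exp (-t * g v)) ^ n := by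
    have hterm : ∀ w : Fin n → α, Real.exp (-t * ∑ i, g (w i))
        = ∏ i : Fin n, Real.exp (-t * g (w i)) := by
      intro w
      rw [← Real.exp_sum, Finset.mul_sum]
    simp_rw [hterm]
    rw [← Fintype.piFinset_univ,
      ← Finset.prod_univ_sum (fun _ : Fin n => (Finset.univ : Finset α))
        (fun _ v => Real.exp (-t * g v))]
    simp
  have h4 : ∑ v : α, Real.exp (-t * g v)
      ≤ (Fintype.card α : ℝ) * Real.exp (-(t * μ) + (3/4) * (t * R) ^ 2) := by
    have hb : ∀ v : α, Real.exp (-t * g v) ≤ 1 + (-t * g v) + (3/4) * (t * g v) ^ 2 := by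
      intro v
      have habs : |(-t * g v)| ≤ 1 := by
        rw [abs_mul, abs_neg, abs_of_nonneg ht]
        calc t * |g v| ≤ t * R := by nlinarith [hR v, abs_nonneg (g v)]
          _ ≤ 1 := htR
      calc Real.exp (-t * g v) ≤ 1 + (-t * g v) + (3/4) * (-t * g v) ^ 2 := exp_quad habs
        _ = 1 + (-t * g v) + (3/4) * (t * g v) ^ 2 := by ring
    have e3 : ∑ v : α, (3/4) * (t * g v) ^ 2
        ≤ (Fintype.card α : ℝ) * ((3/4) * (t * R) ^ 2) := by
      have hv : ∀ v : α, (3/4) * (t * g v) ^ 2 ≤ (3/4) * (t * R) ^ 2 := by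
        intro v
        have h1 := hR v
        have h0 : 0 ≤ R := le_trans (abs_nonneg _) h1
        have hsq : (g v) ^ 2 ≤ R ^ 2 := by nlinarith [neg_abs_le (g v), le_abs_self (g v)]
        nlinarith [sq_nonneg t]
      calc ∑ v : α, (3/4) * (t * g v) ^ 2 ≤ ∑ _v : α, (3/4) * (t * R) ^ 2 :=
            Finset.sum_le_sum fun v _ => hv v
        _ = (Fintype.card α : ℝ) * ((3/4) * (t * R) ^ 2) := by
            rw [Finset.sum_const, Finset.card_univ, nsmul_eq_mul]
    calc ∑ v : α, Real.exp (-t * g v)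
        ≤ ∑ v : α, (1 + (-t * g v) + (3/4) * (t * g v) ^ 2) :=
          Finset.sum_le_sum fun v _ => hb v
      _ ≤ (Fintype.card α : ℝ) * (1 + (-(t * μ)) + (3/4) * (t * R) ^ 2) := by
          rw [Finset.sum_add_distrib, Finset.sum_add_distrib]
          have e1 : ∑ _v : α, (1:ℝ) = (Fintype.card α : ℝ) := by simp
          have e2 : ∑ v : α, (-t * g v) = -(t * ((Fintype.card α : ℝ) * μ)) := by
            rw [← Finset.mul_sum, hmean]; ring
          rw [e1, e2]
          linarith [e3]
      _ ≤ (Fintype.card α : ℝ) * Real.exp (-(t * μ) + (3/4) * (t * R) ^ 2) := by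
          have := Real.add_one_le_exp (-(t * μ) + (3/4) * (t * R) ^ 2)
          have hcard : (0:ℝ) ≤ (Fintype.card α : ℝ) := Nat.cast_nonneg _
          nlinarith
  have h5 : (∑ v : α, Real.exp (-t * g v)) ^ n
      ≤ ((Fintype.card α : ℝ) * Real.exp (-(t * μ) + (3/4) * (t * R) ^ 2)) ^ n :=
    pow_le_pow_left₀ (Finset.sum_nonneg fun v _ => (Real.exp_pos _).le) h4 n
  have h6 : ((Fintype.card α : ℝ) * Real.exp (-(t * μ) + (3/4) * (t * R) ^ 2)) ^ n
      = (Fintype.card α : ℝ) ^ n * Real.exp (n * (-(t * μ) + (3/4) * (t * R) ^ 2)) := by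
    rw [mul_pow, ← Real.exp_nat_mul]
  have hfinal : (F.card : ℝ) * Real.exp (-(t * (n * μ / 2)))
      ≤ (Fintype.card α : ℝ) ^ n * Real.exp (n * (-(t * μ) + (3/4) * (t * R) ^ 2)) := by
    calc (F.card : ℝ) * Real.exp (-(t * (n * μ / 2))) ≤ _ := h1
      _ ≤ _ := h2
      _ = _ := h3
      _ ≤ _ := h5
      _ = _ := h6
  have hepos := Real.exp_pos (-(t * (n * μ / 2)))
  have h7 : (F.card : ℝ)
      ≤ ((Fintype.card α : ℝ) ^ n * Real.exp (n * (-(t * μ) + (3/4) * (t * R) ^ 2)))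
        / Real.exp (-(t * (n * μ / 2))) := (le_div_iff₀ hepos).2 hfinal
  calc (F.card : ℝ) ≤ _ := h7
    _ = (Fintype.card α : ℝ) ^ n * Real.exp (n * (-(t * μ) / 2 + (3/4) * (t * R) ^ 2)) := by
        rw [mul_div_assoc, ← Real.exp_sub]
        congr 2
        ring

/-! ### Measure computations on the discrete cube -/

instance (d : ℕ) : IsProbabilityMeasure (unifPM d) := by
  unfold unifPM; infer_instance

lemma meas_all {n d : ℕ} (S : Set (Fin n → Fin d → Bool)) : MeasurableSet S :=
  S.to_countable.measurableSet

lemma unifPM_singleton (d : ℕ) (v : Fin d → Bool) :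
    unifPM d {v} = ((2 : ENNReal) ^ d)⁻¹ := by
  rw [unifPM, PMF.toMeasure_apply_singleton _ _ (measurableSet_singleton v),
    PMF.uniformOfFintype_apply]
  congr 1
  simp [Fintype.card_fun]

lemma pi_unif_singleton (d n : ℕ) (w : Fin n → Fin d → Bool) :
    (Measure.pi fun _ : Fin n => unifPM d) {w} = ((2 : ENNReal) ^ (n * d))⁻¹ := by
  have : {w} = Set.pi Set.univ (fun i => {w i}) := by
    rw [Set.univ_pi_singleton]
  rw [this, Measure.pi_pi]
  simp_rw [unifPM_singleton]
  rw [Finset.prod_const]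
  simp [← ENNReal.inv_pow, ← pow_mul, Finset.card_univ, Nat.mul_comm]

lemma pi_unif_finset (d n : ℕ) (F : Finset (Fin n → Fin d → Bool)) :
    ((Measure.pi fun _ : Fin n => unifPM d) ↑F).toReal = (F.card : ℝ) / 2 ^ (n * d) := by
  have hU : (↑F : Set (Fin n → Fin d → Bool)) = ⋃ w ∈ F, {w} :=
    (Set.biUnion_of_singleton _).symm
  rw [hU, measure_biUnion_finset ?hd fun w _ => meas_all {w}]
  case hd =>
    intro x _ y _ hxy
    simp [Set.disjoint_singleton, hxy]
  simp_rw [pi_unif_singleton]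
  rw [Finset.sum_const]
  simp [ENNReal.toReal_inv, div_eq_mul_inv]

theorem stmt_4 :
    ∃ c₁ : ℝ, 0 < c₁ ∧
    ∀ (d n a : ℕ), a ≤ d →
    ∀ (σ : ℝ → ℝ) (b : ℝ) (R : ℝ),
    0 < |Δa d a b σ| →
    (∀ w x : Fin d → Bool, |σ (dotB w x + b)| ≤ R) →
    c₁ * d * R ^ 2 / |Δa d a b σ| ^ 2 ≤ (n : ℝ) →
    1 - Real.exp (-(d : ℝ)) ≤
      ((Measure.pi fun _ : Fin n => unifPM d)
        {w : Fin n → (Fin d → Bool) |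
          ∀ x : Fin d → Bool,
            parityF d a x * ∑ i : Fin n,
              (Real.sign (Δa d a b σ) *
                  (∏ j ∈ Finset.univ.filter (fun j : Fin d => (j : ℕ) < d - a), pm (w i j))
                / Real.sqrt n) * σ (dotB (w i) x + b)
            ≥ Real.sqrt n * |Δa d a b σ| / 2}).toReal := by
  refine ⟨24, by norm_num, ?_⟩
  intro d n a _ha σ b R hμ hσ hn
  have hΔne : Δa d a b σ ≠ 0 := by
    intro h
    rw [h, abs_zero] at hμ
    exact lt_irrefl _ hμ
  have hμR : |Δa d a b σ| ≤ R := abs_Δa_le hσ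
  have hRpos : 0 < R := lt_of_lt_of_le hμ hμR
  set μ := |Δa d a b σ| with hμdef
  set ν := (Measure.pi fun _ : Fin n => unifPM d) with hν
  set E := {w : Fin n → (Fin d → Bool) |
          ∀ x : Fin d → Bool,
            parityF d a x * ∑ i : Fin n,
              (Real.sign (Δa d a b σ) *
                  (∏ j ∈ Finset.univ.filter (fun j : Fin d => (j : ℕ) < d - a), pm (w i j))
                / Real.sqrt n) * σ (dotB (w i) x + b)
            ≥ Real.sqrt n * μ / 2} with hE
  have hprob : IsProbabilityMeasure ν := by rw [hν]; infer_instance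
  rcases Nat.eq_zero_or_pos n with hn0 | hnpos
  · subst hn0
    have hEuniv : E = Set.univ := by
      rw [hE]
      ext w
      simp only [Set.mem_setOf_eq, Set.mem_univ, iff_true]
      intro x
      simp
    rw [hEuniv, measure_univ, ENNReal.toReal_one]
    linarith [Real.exp_pos (-(d : ℝ))]
  -- main case
  set t := μ / (3 * R ^ 2) with ht
  have htnn : 0 ≤ t := by positivity
  have htR : t * R ≤ 1 := by
    have h1 : t * R = μ / (3 * R) := by rw [ht]; field_simp
    rw [h1, div_le_one (by positivity)]
    linarith
  classical
  set Bad : (Fin d → Bool) → Finset (Fin n → Fin d → Bool) := fun x =>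
    Set.Finite.toFinset (Set.toFinite
      {w : Fin n → Fin d → Bool | ∑ i, eta d a b σ x (w i) ≤ n * μ / 2}) with hBad
  have hcard : ∀ x : Fin d → Bool,
      ((Bad x).card : ℝ) ≤ (2:ℝ) ^ (n * d) * Real.exp (-(2 * (d:ℝ))) := by
    intro x
    have h := chernoff_count n (eta d a b σ x) R μ t (abs_eta_le hσ x) (sum_eta hΔne x)
      htnn htR (Bad x) (fun w hw => by
        rw [hBad, Set.Finite.mem_toFinset] at hw
        exact hw)
    have hcardα : (Fintype.card (Fin d → Bool) : ℝ) = 2 ^ d := by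
      simp [Fintype.card_fun]
    rw [hcardα] at h
    have hexp_eq : (n:ℝ) * (-(t * μ) / 2 + (3/4) * (t * R) ^ 2)
        = -((n:ℝ) * μ ^ 2 / (12 * R ^ 2)) := by
      rw [ht]
      field_simp
      ring
    rw [hexp_eq] at h
    have hpow : ((2:ℝ) ^ d) ^ n = (2:ℝ) ^ (n * d) := by
      rw [← pow_mul, Nat.mul_comm]
    rw [hpow] at h
    refine le_trans h (mul_le_mul_of_nonneg_left ?_ (by positivity))
    apply Real.exp_le_exp.2
    rw [neg_le_neg_iff]
    have h24 : 24 * (d:ℝ) * R ^ 2 ≤ (n:ℝ) * μ ^ 2 := by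
      have hμ2 : (0:ℝ) < μ ^ 2 := by positivity
      calc 24 * (d:ℝ) * R ^ 2 = (24 * (d:ℝ) * R ^ 2 / μ ^ 2) * μ ^ 2 := by field_simp
        _ ≤ (n:ℝ) * μ ^ 2 := mul_le_mul_of_nonneg_right hn hμ2.le
    rw [le_div_iff₀ (by positivity : (0:ℝ) < 12 * R ^ 2)]
    linarith
  have hsqpos : (0:ℝ) < Real.sqrt n := Real.sqrt_pos.2 (by exact_mod_cast hnpos)
  have hsub : Eᶜ ⊆ ⋃ x : Fin d → Bool, (↑(Bad x) : Set (Fin n → Fin d → Bool)) := by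
    intro w hw
    rw [Set.mem_compl_iff, hE, Set.mem_setOf_eq] at hw
    push_neg at hw
    obtain ⟨x, hx⟩ := hw
    refine Set.mem_iUnion.2 ⟨x, ?_⟩
    rw [hBad, Finset.mem_coe, Set.Finite.mem_toFinset, Set.mem_setOf_eq]
    have hrw : parityF d a x * ∑ i : Fin n,
        (Real.sign (Δa d a b σ) *
            (∏ j ∈ Finset.univ.filter (fun j : Fin d => (j : ℕ) < d - a), pm (w i j))
          / Real.sqrt n) * σ (dotB (w i) x + b)
        = (∑ i, eta d a b σ x (w i)) / Real.sqrt n := by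
      rw [Finset.mul_sum, Finset.sum_div]
      refine Finset.sum_congr rfl fun i _ => ?_
      simp only [eta, parityF]
      ring
    rw [hrw] at hx
    have h2 := (div_lt_iff₀ hsqpos).1 hx
    have hss : Real.sqrt n * μ / 2 * Real.sqrt n = (n:ℝ) * μ / 2 := by
      have : Real.sqrt n * Real.sqrt n = (n:ℝ) :=
        Real.mul_self_sqrt (Nat.cast_nonneg n)
      nlinarith [this]
    rw [hss] at h2
    exact h2.le
  have hcomp : (ν Eᶜ).toReal ≤ Real.exp (-(d:ℝ)) := by
    have hm1 : ν Eᶜ ≤ ∑ x : Fin d → Bool, ν ↑(Bad x) :=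
      le_trans (measure_mono hsub) (measure_iUnion_fintype_le _ _)
    have hne : ∀ x : Fin d → Bool, ν ↑(Bad x) ≠ ⊤ := fun x => measure_ne_top ν _
    have htop : (∑ x : Fin d → Bool, ν ↑(Bad x)) ≠ ⊤ :=
      (ENNReal.sum_lt_top.2 fun x _ => lt_top_iff_ne_top.2 (hne x)).ne
    have h2 : (ν Eᶜ).toReal ≤ (∑ x : Fin d → Bool, ν ↑(Bad x)).toReal :=
      ENNReal.toReal_mono htop hm1
    rw [ENNReal.toReal_sum (fun x _ => hne x)] at h2
    refine le_trans h2 ?_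
    have h3 : ∀ x : Fin d → Bool, (ν ↑(Bad x)).toReal ≤ Real.exp (-(2 * (d:ℝ))) := by
      intro x
      rw [hν, pi_unif_finset]
      rw [div_le_iff₀ (by positivity : (0:ℝ) < 2 ^ (n * d))]
      calc ((Bad x).card : ℝ) ≤ (2:ℝ) ^ (n * d) * Real.exp (-(2 * (d:ℝ))) := hcard x
        _ = Real.exp (-(2 * (d:ℝ))) * 2 ^ (n * d) := by ring
    calc ∑ x : Fin d → Bool, (ν ↑(Bad x)).toReal
        ≤ ∑ _x : Fin d → Bool, Real.exp (-(2 * (d:ℝ))) :=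
          Finset.sum_le_sum fun x _ => h3 x
      _ = (2:ℝ) ^ d * Real.exp (-(2 * (d:ℝ))) := by
          rw [Finset.sum_const, Finset.card_univ, Fintype.card_fun, Fintype.card_bool,
            Fintype.card_fin, nsmul_eq_mul]
          push_cast
          ring
      _ ≤ Real.exp (-(d:ℝ)) := by
          have h2e : (2:ℝ) ≤ Real.exp 1 := by linarith [Real.add_one_le_exp 1]
          have hp : (2:ℝ) ^ d ≤ Real.exp 1 ^ d := pow_le_pow_left₀ (by norm_num) h2e d
          rw [Real.exp_one_pow] at hp
          calc (2:ℝ) ^ d * Real.exp (-(2 * (d:ℝ)))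
              ≤ Real.exp d * Real.exp (-(2 * (d:ℝ))) :=
                mul_le_mul_of_nonneg_right hp (Real.exp_pos _).le
            _ = Real.exp (-(d:ℝ)) := by rw [← Real.exp_add]; congr 1; ring
  have hsumm : (ν E).toReal + (ν Eᶜ).toReal = 1 := by
    rw [← ENNReal.toReal_add (measure_ne_top _ _) (measure_ne_top _ _),
      measure_add_measure_compl (meas_all E), measure_univ, ENNReal.toReal_one]
  linarith
end

section
/- For every α₀ > 0 there exist C, C' > 0 such that for all d ∈ ℕ, d ≥ 1, and all real α, β with α ≥ α₀ and α + |β| ≤ 1: | ∑_{k=0}^d 2^{−d} C(d,k) (−1)^k ( 1/4 + (1/(2π)) arcsin( (1 − 2k/d)α + β ) ) | ≤ C' e^{−C d}. -/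
open Real

section Stmt12Aux

open Finset

lemma L0 (g : ℕ → ℝ) (d : ℕ) :
    ∑ k ∈ range (d+2), (-1:ℝ)^k * ((d+1).choose k) * g k
      = ∑ k ∈ range (d+1), (-1:ℝ)^k * (d.choose k) * (g k - g (k+1)) := by
  have h1 : ∑ k ∈ range (d+2), (-1:ℝ)^k * ((d+1).choose k) * g k
      = (∑ j ∈ range (d+1), (-1:ℝ)^(j+1) * ((d+1).choose (j+1)) * g (j+1)) + g 0 := by
    rw [Finset.sum_range_succ']; simp
  have h2 : ∑ k ∈ range (d+2), (-1:ℝ)^k * (d.choose k) * g k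
      = (∑ j ∈ range (d+1), (-1:ℝ)^(j+1) * (d.choose (j+1)) * g (j+1)) + g 0 := by
    rw [Finset.sum_range_succ']; simp
  have h3 : ∑ k ∈ range (d+2), (-1:ℝ)^k * (d.choose k) * g k
      = ∑ k ∈ range (d+1), (-1:ℝ)^k * (d.choose k) * g k := by
    rw [Finset.sum_range_succ, Nat.choose_succ_self]; simp
  have h4 : ∀ j, ((d+1).choose (j+1) : ℝ) = (d.choose j : ℝ) + (d.choose (j+1) : ℝ) := by
    intro j; rw [Nat.choose_succ_succ]; push_cast; ring
  calc ∑ k ∈ range (d+2), (-1:ℝ)^k * ((d+1).choose k) * g k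
      = (∑ j ∈ range (d+1), ((-1:ℝ)^(j+1) * (d.choose j) * g (j+1)
          + (-1:ℝ)^(j+1) * (d.choose (j+1)) * g (j+1))) + g 0 := by
        rw [h1]; congr 1; apply Finset.sum_congr rfl; intro j _; rw [h4]; ring
    _ = (∑ j ∈ range (d+1), (-1:ℝ)^(j+1) * (d.choose j) * g (j+1))
          + ((∑ j ∈ range (d+1), (-1:ℝ)^(j+1) * (d.choose (j+1)) * g (j+1)) + g 0) := by
        rw [Finset.sum_add_distrib]; ring
    _ = (∑ j ∈ range (d+1), (-1:ℝ)^(j+1) * (d.choose j) * g (j+1))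
          + ∑ k ∈ range (d+1), (-1:ℝ)^k * (d.choose k) * g k := by rw [← h2, h3]
    _ = ∑ k ∈ range (d+1), (-1:ℝ)^k * (d.choose k) * (g k - g (k+1)) := by
        rw [← Finset.sum_add_distrib]; apply Finset.sum_congr rfl; intro j _; ring

lemma kill : ∀ (d n : ℕ), n < d → ∀ (a b : ℝ),
    ∑ k ∈ range (d+1), (-1:ℝ)^k * (d.choose k) * (a * k + b)^n = 0 := by
  intro d
  induction d with
  | zero => intro n hn; omega
  | succ d ih =>
    intro n hn a b
    rw [L0 (fun k => (a * k + b)^n) d]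
    have key : ∀ k : ℕ, (fun k : ℕ => (a * k + b)^n) k - (fun k : ℕ => (a * k + b)^n) (k+1)
        = ∑ j ∈ range n, (-(a^(n-j) * (n.choose j))) * (a * k + b)^j := by
      intro k
      simp only
      have expand : (a * ((k:ℕ)+1:ℕ) + b)^n = ((a * k + b) + a)^n := by push_cast; ring_nf
      have hadd := add_pow (a * (k:ℝ) + b) a n
      rw [expand, hadd, Finset.sum_range_succ]
      simp only [Nat.choose_self, Nat.sub_self, pow_zero, Nat.cast_one, mul_one]
      rw [show ∀ x S : ℝ, x - (S + x) = -S from fun x S => by ring,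
        ← Finset.sum_neg_distrib]
      apply Finset.sum_congr rfl
      intro j _; ring
    calc ∑ k ∈ range (d+1), (-1:ℝ)^k * (d.choose k)
            * ((fun k : ℕ => (a * k + b)^n) k - (fun k : ℕ => (a * k + b)^n) (k+1))
        = ∑ k ∈ range (d+1), ∑ j ∈ range n,
            (-(a^(n-j) * (n.choose j))) * ((-1:ℝ)^k * (d.choose k) * (a * k + b)^j) := by
          apply Finset.sum_congr rfl; intro k _
          rw [key k, Finset.mul_sum]
          apply Finset.sum_congr rfl; intro j _; ring
      _ = ∑ j ∈ range n, (-(a^(n-j) * (n.choose j)))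
            * ∑ k ∈ range (d+1), (-1:ℝ)^k * (d.choose k) * (a * k + b)^j := by
          rw [Finset.sum_comm]
          apply Finset.sum_congr rfl; intro j _
          rw [Finset.mul_sum]
      _ = 0 := by
          apply Finset.sum_eq_zero; intro j hj
          rw [ih j (by have := Finset.mem_range.1 hj; omega) a b, mul_zero]


noncomputable def bb (m : ℕ) : ℝ := (Nat.centralBinom m : ℝ) / 4 ^ m
noncomputable def cc (m : ℕ) : ℝ := bb m / (2 * m + 1)

lemma bb_nonneg (m : ℕ) : 0 ≤ bb m := by
  unfold bb; positivity

lemma bb_le_one (m : ℕ) : bb m ≤ 1 := by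
  unfold bb
  rw [div_le_one (by positivity)]
  have : Nat.centralBinom m ≤ 2 ^ (2 * m) := by
    unfold Nat.centralBinom
    calc (2*m).choose m ≤ ∑ i ∈ range (2*m+1), (2*m).choose i :=
          Finset.single_le_sum (fun i _ => Nat.zero_le _) (by simp; omega)
      _ = 2 ^ (2*m) := Nat.sum_range_choose (2*m)
  calc (Nat.centralBinom m : ℝ) ≤ ((2:ℕ) ^ (2*m) : ℕ) := by exact_mod_cast this
    _ = 4 ^ m := by push_cast [pow_mul]; norm_num

lemma cc_nonneg (m : ℕ) : 0 ≤ cc m := by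
  unfold cc; have := bb_nonneg m; positivity

lemma cc_mul (m : ℕ) : cc m * (2 * m + 1) = bb m := by
  unfold cc
  field_simp

lemma bb_rec (m : ℕ) : 2 * ((m:ℝ) + 1) * bb (m+1) = (2 * m + 1) * bb m := by
  unfold bb
  have h := Nat.succ_mul_centralBinom_succ m
  have h' : ((m:ℝ) + 1) * (Nat.centralBinom (m+1) : ℝ)
      = 2 * (2 * m + 1) * (Nat.centralBinom m : ℝ) := by exact_mod_cast h
  have h4 : (4:ℝ) ^ (m+1) = 4 * 4 ^ m := by ring
  rw [h4]
  field_simp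
  linear_combination 2 * h'

/-- universal dominating sequence -/
lemma summable_dom {r : ℝ} (hr : |r| < 1) : Summable (fun m : ℕ => (2*(m:ℝ)+2) * |r|^m) := by
  have h1 : Summable (fun m : ℕ => (m:ℝ) * |r|^m) := by
    simpa using summable_pow_mul_geometric_of_norm_lt_one 1 (by rwa [Real.norm_eq_abs, abs_abs] : ‖|r|‖ < 1)
  have h2 : Summable (fun m : ℕ => |r|^m) := summable_geometric_of_lt_one (abs_nonneg r) hr
  have := (h1.mul_left 2).add (h2.mul_left 2)
  refine this.congr fun m => ?_
  ring

lemma summable_of_dom {r : ℝ} (hr : |r| < 1) (f : ℕ → ℝ)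
    (h : ∀ m, |f m| ≤ (2*(m:ℝ)+2) * |r|^m) : Summable f :=
  Summable.of_norm_bounded (summable_dom hr) (by simpa using h)

noncomputable def FF (x : ℝ) : ℝ := ∑' m : ℕ, bb m * x ^ (2*m)
noncomputable def GG (x : ℝ) : ℝ := ∑' m : ℕ, cc m * x ^ (2*m+1)

lemma dom_F {x : ℝ} (hx : |x| < 1) (m : ℕ) : |bb m * x ^ (2*m)| ≤ (2*(m:ℝ)+2) * |x|^m := by
  rw [abs_mul, abs_pow]
  have h1 : |x|^(2*m) ≤ |x|^m :=
    pow_le_pow_of_le_one (abs_nonneg x) hx.le (by omega)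
  have h2 : |bb m| ≤ 1 := by rw [abs_of_nonneg (bb_nonneg m)]; exact bb_le_one m
  have h3 : (1:ℝ) ≤ 2*(m:ℝ)+2 := by
    have : (0:ℝ) ≤ m := Nat.cast_nonneg m
    linarith
  calc |bb m| * |x|^(2*m) ≤ 1 * |x|^m := by
        apply mul_le_mul h2 h1 (by positivity) (by norm_num)
    _ ≤ (2*(m:ℝ)+2) * |x|^m := by
        apply mul_le_mul_of_nonneg_right h3 (by positivity)

lemma summable_F {x : ℝ} (hx : |x| < 1) : Summable (fun m : ℕ => bb m * x ^ (2*m)) :=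
  summable_of_dom hx _ (dom_F hx)

lemma dom_G {x : ℝ} (hx : |x| < 1) (m : ℕ) : |cc m * x ^ (2*m+1)| ≤ (2*(m:ℝ)+2) * |x|^m := by
  rw [abs_mul, abs_pow]
  have h1 : |x|^(2*m+1) ≤ |x|^m :=
    pow_le_pow_of_le_one (abs_nonneg x) hx.le (by omega)
  have h2 : |cc m| ≤ 1 := by
    rw [abs_of_nonneg (cc_nonneg m)]
    unfold cc
    calc bb m / (2*(m:ℝ)+1) ≤ bb m := by
          apply div_le_self (bb_nonneg m)
          have : (0:ℝ) ≤ m := Nat.cast_nonneg m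
          linarith
      _ ≤ 1 := bb_le_one m
  have h3 : (1:ℝ) ≤ 2*(m:ℝ)+2 := by
    have : (0:ℝ) ≤ m := Nat.cast_nonneg m
    linarith
  calc |cc m| * |x|^(2*m+1) ≤ 1 * |x|^m :=
        mul_le_mul h2 h1 (by positivity) (by norm_num)
    _ ≤ (2*(m:ℝ)+2) * |x|^m := mul_le_mul_of_nonneg_right h3 (by positivity)

lemma summable_G {x : ℝ} (hx : |x| < 1) : Summable (fun m : ℕ => cc m * x ^ (2*m+1)) :=
  summable_of_dom hx _ (dom_G hx)

lemma dom_F' {x : ℝ} (hx : |x| < 1) (m : ℕ) :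
    |bb m * ((2*m:ℕ) * x ^ (2*m-1))| ≤ (2*(m:ℝ)+2) * |x|^m := by
  rcases Nat.eq_zero_or_pos m with h | h
  · subst h; simp
  · rw [abs_mul, abs_mul, abs_pow]
    have h1 : |x|^(2*m-1) ≤ |x|^m :=
      pow_le_pow_of_le_one (abs_nonneg x) hx.le (by omega)
    have h2 : |bb m| ≤ 1 := by rw [abs_of_nonneg (bb_nonneg m)]; exact bb_le_one m
    have h4 : |((2*m:ℕ):ℝ)| = 2*(m:ℝ) := by
      rw [abs_of_nonneg (by positivity)]; push_cast; ring
    calc |bb m| * (|((2*m:ℕ):ℝ)| * |x|^(2*m-1))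
        ≤ 1 * ((2*(m:ℝ)) * |x|^m) := by
          rw [h4]
          apply mul_le_mul h2 (mul_le_mul_of_nonneg_left h1 (by positivity))
            (by positivity) (by norm_num)
      _ ≤ (2*(m:ℝ)+2) * |x|^m := by
          rw [one_mul]
          apply mul_le_mul_of_nonneg_right (by linarith) (by positivity)

lemma summable_F' {x : ℝ} (hx : |x| < 1) :
    Summable (fun m : ℕ => bb m * ((2*m:ℕ) * x ^ (2*m-1))) :=
  summable_of_dom hx _ (dom_F' hx)

lemma dom_S1 {x : ℝ} (hx : |x| < 1) (m : ℕ) :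
    |((2*m:ℕ):ℝ) * bb m * x^(2*m+1)| ≤ (2*(m:ℝ)+2) * |x|^m := by
  rw [abs_mul, abs_mul, abs_pow]
  have h1 : |x|^(2*m+1) ≤ |x|^m :=
    pow_le_pow_of_le_one (abs_nonneg x) hx.le (by omega)
  have h2 : |bb m| ≤ 1 := by rw [abs_of_nonneg (bb_nonneg m)]; exact bb_le_one m
  have h4 : |((2*m:ℕ):ℝ)| = 2*(m:ℝ) := by
    rw [abs_of_nonneg (by positivity)]; push_cast; ring
  rw [h4]
  calc 2*(m:ℝ) * |bb m| * |x|^(2*m+1) ≤ (2*(m:ℝ)) * 1 * |x|^m := by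
        apply mul_le_mul (mul_le_mul_of_nonneg_left h2 (by positivity)) h1
          (by positivity) (by positivity)
    _ ≤ (2*(m:ℝ)+2) * |x|^m := by
        apply mul_le_mul_of_nonneg_right (by linarith) (by positivity)

lemma summable_S1 {x : ℝ} (hx : |x| < 1) :
    Summable (fun m : ℕ => ((2*m:ℕ):ℝ) * bb m * x^(2*m+1)) :=
  summable_of_dom hx _ (dom_S1 hx)

lemma dom_S2 {x : ℝ} (hx : |x| < 1) (m : ℕ) :
    |bb m * x^(2*m+1)| ≤ (2*(m:ℝ)+2) * |x|^m := by
  rw [abs_mul, abs_pow]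
  have h1 : |x|^(2*m+1) ≤ |x|^m :=
    pow_le_pow_of_le_one (abs_nonneg x) hx.le (by omega)
  have h2 : |bb m| ≤ 1 := by rw [abs_of_nonneg (bb_nonneg m)]; exact bb_le_one m
  have h3 : (1:ℝ) ≤ 2*(m:ℝ)+2 := by
    have : (0:ℝ) ≤ m := Nat.cast_nonneg m
    linarith
  calc |bb m| * |x|^(2*m+1) ≤ 1 * |x|^m :=
        mul_le_mul h2 h1 (by positivity) (by norm_num)
    _ ≤ (2*(m:ℝ)+2) * |x|^m := mul_le_mul_of_nonneg_right h3 (by positivity)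

lemma summable_S2 {x : ℝ} (hx : |x| < 1) :
    Summable (fun m : ℕ => bb m * x^(2*m+1)) :=
  summable_of_dom hx _ (dom_S2 hx)

lemma F_hasDeriv {x : ℝ} (hx : |x| < 1) :
    HasDerivAt FF (∑' m : ℕ, bb m * (((2*m:ℕ):ℝ) * x^(2*m-1))) x := by
  set r : ℝ := (1 + |x|)/2 with hr_def
  have hr0 : 0 < r := by have := abs_nonneg x; rw [hr_def]; linarith
  have hxr : |x| < r := by rw [hr_def]; linarith
  have hr1 : r < 1 := by rw [hr_def]; linarith
  have hrabs : |r| < 1 := by rwa [abs_of_pos hr0]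
  have hu : Summable (fun m : ℕ => (2*(m:ℝ)+2) * r^m) := by
    have := summable_dom hrabs
    simpa [abs_of_pos hr0] using this
  apply hasDerivAt_tsum_of_isPreconnected hu Metric.isOpen_ball
      (convex_ball (0:ℝ) r).isPreconnected
      (g := fun m y => bb m * y^(2*m))
      (g' := fun m y => bb m * (((2*m:ℕ):ℝ) * y^(2*m-1)))
      (y₀ := 0) (y := x)
  · intro m y _
    exact (hasDerivAt_pow (2*m) y).const_mul (bb m)
  · intro m y hy
    have hy1 : |y| < r := by
      simpa [Real.dist_eq] using hy
    have : |bb m * (((2*m:ℕ):ℝ) * y^(2*m-1))| ≤ (2*(m:ℝ)+2) * |y|^m :=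
      dom_F' (lt_trans hy1 hr1) m
    rw [Real.norm_eq_abs]
    refine this.trans ?_
    apply mul_le_mul_of_nonneg_left (pow_le_pow_left₀ (abs_nonneg y) hy1.le m) (by positivity)
  · simpa [Real.dist_eq] using hr0
  · exact summable_F (by simpa using hr0.trans hr1 |> fun _ => (by norm_num : |(0:ℝ)| < 1))
  · simpa [Real.dist_eq] using hxr

lemma G_hasDeriv {x : ℝ} (hx : |x| < 1) :
    HasDerivAt GG (FF x) x := by
  set r : ℝ := (1 + |x|)/2 with hr_def
  have hr0 : 0 < r := by have := abs_nonneg x; rw [hr_def]; linarith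
  have hxr : |x| < r := by rw [hr_def]; linarith
  have hr1 : r < 1 := by rw [hr_def]; linarith
  have hrabs : |r| < 1 := by rwa [abs_of_pos hr0]
  have hu : Summable (fun m : ℕ => (2*(m:ℝ)+2) * r^m) := by
    have := summable_dom hrabs
    simpa [abs_of_pos hr0] using this
  have key : HasDerivAt (fun z => ∑' m : ℕ, cc m * z^(2*m+1))
      (∑' m : ℕ, bb m * x^(2*m)) x := by
    apply hasDerivAt_tsum_of_isPreconnected hu Metric.isOpen_ball
        (convex_ball (0:ℝ) r).isPreconnected
        (g := fun m y => cc m * y^(2*m+1))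
        (g' := fun m y => bb m * y^(2*m))
        (y₀ := 0) (y := x)
    · intro m y _
      have h := (hasDerivAt_pow (2*m+1) y).const_mul (cc m)
      have heq : cc m * (((2*m+1:ℕ):ℝ) * y^(2*m+1-1)) = bb m * y^(2*m) := by
        have : (2*m+1-1) = 2*m := by omega
        rw [this, ← mul_assoc, show (((2*m+1:ℕ):ℝ)) = 2*(m:ℝ)+1 by push_cast; ring,
          cc_mul m]
      rwa [heq] at h
    · intro m y hy
      have hy1 : |y| < r := by simpa [Real.dist_eq] using hy
      have : |bb m * y^(2*m)| ≤ (2*(m:ℝ)+2) * |y|^m := dom_F (lt_trans hy1 hr1) m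
      rw [Real.norm_eq_abs]
      refine this.trans ?_
      apply mul_le_mul_of_nonneg_left (pow_le_pow_left₀ (abs_nonneg y) hy1.le m) (by positivity)
    · simpa [Real.dist_eq] using hr0
    · exact summable_G (by norm_num : |(0:ℝ)| < 1)
    · simpa [Real.dist_eq] using hxr
  exact key

lemma ode {x : ℝ} (hx : |x| < 1) :
    (1 - x^2) * (∑' m : ℕ, bb m * (((2*m:ℕ):ℝ) * x^(2*m-1))) = x * FF x := by
  set A := ∑' m : ℕ, bb m * (((2*m:ℕ):ℝ) * x^(2*m-1)) with hA
  have hshift : A = ∑' m : ℕ, (((2*m:ℕ):ℝ) * bb m * x^(2*m+1) + bb m * x^(2*m+1)) := by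
    rw [hA, Summable.tsum_eq_zero_add (summable_F' hx)]
    simp only [Nat.mul_zero, Nat.cast_zero, zero_mul, mul_zero, zero_add]
    apply tsum_congr
    intro m
    have hexp : 2*(m+1)-1 = 2*m+1 := by omega
    have hrec := bb_rec m
    have hcast : ((2*(m+1):ℕ):ℝ) = 2*((m:ℝ)+1) := by push_cast; ring
    rw [hexp, hcast, ← mul_assoc, mul_comm (bb (m+1)) (2*((m:ℝ)+1)), hrec]
    push_cast
    ring
  have hsplit : A = (∑' m : ℕ, ((2*m:ℕ):ℝ) * bb m * x^(2*m+1))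
      + ∑' m : ℕ, bb m * x^(2*m+1) := by
    rw [hshift, Summable.tsum_add (summable_S1 hx) (summable_S2 hx)]
  have hxA : x^2 * A = ∑' m : ℕ, ((2*m:ℕ):ℝ) * bb m * x^(2*m+1) := by
    rw [hA, ← tsum_mul_left]
    apply tsum_congr
    intro m
    rcases Nat.eq_zero_or_pos m with h | h
    · subst h; simp
    · have hexp : 2*m-1+2 = 2*m+1 := by omega
      calc x^2 * (bb m * (((2*m:ℕ):ℝ) * x^(2*m-1)))
          = ((2*m:ℕ):ℝ) * bb m * (x^(2*m-1) * x^2) := by ring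
        _ = ((2*m:ℕ):ℝ) * bb m * x^(2*m+1) := by rw [← pow_add, hexp]
  have hxF : x * FF x = ∑' m : ℕ, bb m * x^(2*m+1) := by
    rw [FF, ← tsum_mul_left]
    apply tsum_congr
    intro m
    rw [pow_succ]
    ring
  rw [sub_mul, one_mul, hxA, hxF]
  rw [hsplit]
  ring

lemma const_of_deriv (u : ℝ → ℝ) (hu : ∀ y : ℝ, |y| < 1 → HasDerivAt u 0 y) :
    ∀ x : ℝ, |x| < 1 → u x = u 0 := by
  intro x hx
  set a := min x 0 with ha
  set b := max x 0 with hb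
  have hmem : ∀ y ∈ Set.Icc a b, |y| < 1 := by
    intro y hy
    rw [abs_lt]
    rcases abs_lt.1 hx with ⟨h1, h2⟩
    constructor
    · calc -1 < min x 0 := by rcases min_cases x 0 with ⟨h, _⟩ | ⟨h, _⟩ <;> rw [h] <;> linarith
        _ ≤ y := hy.1
    · calc y ≤ max x 0 := hy.2
        _ < 1 := by rcases max_cases x 0 with ⟨h, _⟩ | ⟨h, _⟩ <;> rw [h] <;> linarith
  have hcont : ContinuousOn u (Set.Icc a b) := fun y hy =>
    ((hu y (hmem y hy)).continuousAt).continuousWithinAt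
  have key := constant_of_has_deriv_right_zero hcont
    (fun y hy => ((hu y (hmem y (Set.Ico_subset_Icc_self hy))).hasDerivWithinAt))
  have hx_mem : x ∈ Set.Icc a b := ⟨min_le_left x 0, le_max_left x 0⟩
  have h0_mem : (0:ℝ) ∈ Set.Icc a b := ⟨min_le_right x 0, le_max_right x 0⟩
  rw [key x hx_mem, key 0 h0_mem]

lemma FF_zero : FF 0 = 1 := by
  rw [FF, Summable.tsum_eq_zero_add (summable_F (by norm_num : |(0:ℝ)| < 1))]
  have : ∀ m : ℕ, bb (m+1) * (0:ℝ)^(2*(m+1)) = 0 := by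
    intro m
    rw [zero_pow (by omega : 2*(m+1) ≠ 0), mul_zero]
  rw [tsum_congr this, tsum_zero]
  simp [bb]

lemma FF_ge_one {x : ℝ} (hx : |x| < 1) : 1 ≤ FF x := by
  have h0 : bb 0 * x^(2*0) = 1 := by simp [bb]
  rw [FF, ← h0]
  apply Summable.le_tsum (summable_F hx) 0
  intro m _
  have : x^(2*m) = (x^m)^2 := by rw [← pow_mul, mul_comm]
  rw [this]
  exact mul_nonneg (bb_nonneg m) (sq_nonneg _)

lemma FF_sq {x : ℝ} (hx : |x| < 1) : FF x ^ 2 * (1 - x^2) = 1 := by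
  set u : ℝ → ℝ := fun y => FF y ^ 2 * (1 - y^2) with hu_def
  have hu : ∀ y : ℝ, |y| < 1 → HasDerivAt u 0 y := by
    intro y hy
    have hF := F_hasDeriv hy
    set A := ∑' m : ℕ, bb m * (((2*m:ℕ):ℝ) * y^(2*m-1)) with hA
    have h1 : HasDerivAt (fun z => FF z ^ 2) (2 * FF y * A) y := by
      have := hF.fun_pow 2
      simpa [mul_comm, mul_assoc] using this
    have h2 : HasDerivAt (fun z : ℝ => 1 - z^2) (-(2*y)) y := by
      have := (hasDerivAt_pow 2 y).const_sub 1
      simpa using this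
    have h3 := h1.mul h2
    have hode := ode hy
    have hzero : 2 * FF y * A * (1 - y^2) + FF y ^ 2 * -(2*y) = 0 := by
      have : (1 - y^2) * A = y * FF y := hode
      linear_combination (2 * FF y) * this
    rwa [hzero] at h3
  have := const_of_deriv u hu x hx
  rw [hu_def] at this
  simp only at this
  rw [this, FF_zero]
  norm_num

lemma FF_eq {x : ℝ} (hx : |x| < 1) : FF x = 1 / Real.sqrt (1 - x^2) := by
  have h1 : (0:ℝ) < 1 - x^2 := by
    rcases abs_lt.1 hx with ⟨ha, hb⟩
    nlinarith
  have h2 : FF x ^ 2 = 1 / (1 - x^2) := by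
    have := FF_sq hx
    field_simp at this ⊢
    linarith [this]
  have h3 : 0 < FF x := lt_of_lt_of_le one_pos (FF_ge_one hx)
  have h4 : FF x = Real.sqrt (1 / (1 - x^2)) := by
    rw [← h2, Real.sqrt_sq h3.le]
  rw [h4, one_div, Real.sqrt_inv, one_div]

lemma GG_eq_arcsin {x : ℝ} (hx : |x| < 1) : GG x = Real.arcsin x := by
  set u : ℝ → ℝ := fun y => GG y - Real.arcsin y with hu_def
  have hu : ∀ y : ℝ, |y| < 1 → HasDerivAt u 0 y := by
    intro y hy
    rcases abs_lt.1 hy with ⟨ha, hb⟩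
    have hG := G_hasDeriv hy
    have hasin := Real.hasDerivAt_arcsin (by linarith : y ≠ -1) (by linarith : y ≠ 1)
    have := hG.sub hasin
    rwa [FF_eq hy, sub_self] at this
  have := const_of_deriv u hu x hx
  rw [hu_def] at this
  simp only at this
  have hG0 : GG 0 = 0 := by
    rw [GG]
    have : ∀ m : ℕ, cc m * (0:ℝ)^(2*m+1) = 0 := by
      intro m
      rw [zero_pow (by omega : 2*m+1 ≠ 0), mul_zero]
    rw [tsum_congr this, tsum_zero]
  rw [Real.arcsin_zero, hG0] at this
  simpa [sub_eq_zero] using this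

lemma partial_cc_le (N : ℕ) : ∑ m ∈ range N, cc m ≤ π / 2 := by
  have hconv : Filter.Tendsto (fun x : ℝ => ∑ m ∈ range N, cc m * x^(2*m+1))
      (nhdsWithin 1 (Set.Iio 1)) (nhds (∑ m ∈ range N, cc m)) := by
    have hcont : Continuous (fun x : ℝ => ∑ m ∈ range N, cc m * x^(2*m+1)) := by
      continuity
    have := hcont.tendsto 1
    simp only [one_pow, mul_one] at this
    exact this.mono_left nhdsWithin_le_nhds
  apply le_of_tendsto hconv
  filter_upwards [Ioo_mem_nhdsLT_of_mem (by norm_num : (1:ℝ) ∈ Set.Ioc 0 1)] with x hx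
  obtain ⟨hx0, hx1⟩ := hx
  have hxabs : |x| < 1 := by rw [abs_of_pos hx0]; exact hx1
  calc ∑ m ∈ range N, cc m * x^(2*m+1) ≤ GG x := by
        apply Summable.sum_le_tsum _ _ (summable_G hxabs)
        intro m _
        exact mul_nonneg (cc_nonneg m) (pow_nonneg hx0.le _)
    _ = Real.arcsin x := GG_eq_arcsin hxabs
    _ ≤ π / 2 := Real.arcsin_le_pi_div_two x

lemma summable_cc : Summable cc :=
  summable_of_sum_range_le cc_nonneg partial_cc_le

lemma tsum_cc_le : ∑' m, cc m ≤ π / 2 :=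
  Real.tsum_le_of_sum_range_le cc_nonneg partial_cc_le

set_option maxHeartbeats 1000000 in
lemma rem_bound (d : ℕ) {x : ℝ} (hx : |x| ≤ 1) :
    |Real.arcsin x - ∑ m ∈ range (d/2), cc m * x^(2*m+1)| ≤ π/2 * |x|^d := by
  set M := d/2 with hM
  rcases lt_or_eq_of_le hx with hlt | heq
  · -- |x| < 1
    have harc : Real.arcsin x = ∑' m, cc m * x^(2*m+1) := (GG_eq_arcsin hlt).symm
    have hsplit := Summable.sum_add_tsum_nat_add M (summable_G hlt)
    have hrem : Real.arcsin x - ∑ m ∈ range M, cc m * x^(2*m+1)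
        = ∑' m : ℕ, cc (m+M) * x^(2*(m+M)+1) := by
      rw [harc, ← hsplit]; ring
    rw [hrem]
    have hsummableTail : Summable (fun m : ℕ => cc (m+M) * x^(2*(m+M)+1)) :=
      (summable_nat_add_iff M).2 (summable_G hlt)
    calc |∑' m : ℕ, cc (m+M) * x^(2*(m+M)+1)|
        ≤ ∑' m : ℕ, |cc (m+M) * x^(2*(m+M)+1)| := by
          have hsum : Summable fun m : ℕ => ‖cc (m+M) * x^(2*(m+M)+1)‖ := by
            simp only [Real.norm_eq_abs]
            exact hsummableTail.abs
          have h2 := norm_tsum_le_tsum_norm hsum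
          simp only [Real.norm_eq_abs] at h2
          exact h2
      _ ≤ ∑' m : ℕ, cc (m+M) * |x|^d := by
          apply Summable.tsum_le_tsum _ hsummableTail.abs ((summable_cc.comp_injective
            (add_left_injective M)).mul_right _)
          intro m
          rw [abs_mul, abs_pow, abs_of_nonneg (cc_nonneg _)]
          apply mul_le_mul_of_nonneg_left _ (cc_nonneg _)
          apply pow_le_pow_of_le_one (abs_nonneg x) hx
          omega
      _ = (∑' m : ℕ, cc (m+M)) * |x|^d := tsum_mul_right
      _ ≤ π/2 * |x|^d := by
          apply mul_le_mul_of_nonneg_right _ (pow_nonneg (abs_nonneg x) d)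
          calc ∑' m : ℕ, cc (m+M) ≤ ∑' m, cc m := by
                rw [← Summable.sum_add_tsum_nat_add M summable_cc]
                have : 0 ≤ ∑ m ∈ range M, cc m := Finset.sum_nonneg fun m _ => cc_nonneg m
                linarith
            _ ≤ π/2 := tsum_cc_le
  · -- |x| = 1
    have hs0 : 0 ≤ ∑ m ∈ range M, cc m := Finset.sum_nonneg fun m _ => cc_nonneg m
    have hs1 : ∑ m ∈ range M, cc m ≤ π/2 := partial_cc_le M
    rw [heq, one_pow, mul_one]
    rcases abs_eq (by norm_num : (0:ℝ) ≤ 1) |>.1 (heq : |x| = 1) with h1 | h1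
    · subst h1
      simp only [one_pow, mul_one, Real.arcsin_one]
      rw [abs_of_nonneg (by linarith)]
      linarith
    · subst h1
      have hpow : ∀ m : ℕ, (-1:ℝ)^(2*m+1) = -1 := by
        intro m
        exact Odd.neg_one_pow ⟨m, by ring⟩
      simp only [hpow, Real.arcsin_neg_one, mul_neg_one]
      have : -(π/2) - ∑ m ∈ range M, -cc m = -(π/2 - ∑ m ∈ range M, cc m) := by
        rw [Finset.sum_neg_distrib]; ring
      rw [this, abs_neg, abs_of_nonneg (by linarith)]
      linarith

end Stmt12Aux

open Finset in
set_option maxHeartbeats 2000000 in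
/-- for every `α₀ > 0` there are `C, C' > 0` such that for all `d ≥ 1` and all
`α ≥ α₀`, `β` with `α + |β| ≤ 1`, the alternating binomial average of
`ρ ↦ 1/4 + arcsin(ρ)/(2π)` at `ρ = (1 − 2k/d)α + β` is at most `C' e^{−Cd}` in absolute value. -/
theorem stmt_12 (α₀ : ℝ) (hα₀ : 0 < α₀) :
    ∃ C C' : ℝ, 0 < C ∧ 0 < C' ∧
      ∀ (d : ℕ), 1 ≤ d → ∀ (α β : ℝ), α₀ ≤ α → α + |β| ≤ 1 →
        |∑ k ∈ Finset.range (d + 1),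
            (2 : ℝ) ^ (-(d : ℝ)) * (d.choose k : ℝ) * (-1 : ℝ) ^ k *
              (1 / 4 + 1 / (2 * π) * arcsin ((1 - 2 * (k : ℝ) / d) * α + β))|
          ≤ C' * Real.exp (-C * d) := by
  set r : ℝ := Real.exp (-(2*α₀)) with hr_def
  have hr0 : 0 < r := Real.exp_pos _
  have hr1 : r < 1 := by
    rw [hr_def, Real.exp_lt_one_iff]
    linarith
  set q : ℝ := (1+r)/2 with hq_def
  have hq0 : 0 < q := by rw [hq_def]; linarith
  have hq1 : q < 1 := by rw [hq_def]; linarith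
  refine ⟨-Real.log q, 1, by simpa using Real.log_neg hq0 hq1, one_pos, ?_⟩
  intro d hd α β hαα hβ
  have hd0 : (0:ℝ) < d := by exact_mod_cast hd
  have hα0 : 0 < α := lt_of_lt_of_le hα₀ hαα
  have hβ' : |β| ≤ 1 - α := by linarith
  have hα1 : α ≤ 1 := by have := abs_nonneg β; linarith
  set M := d/2 with hM_def
  set t : ℝ := (2:ℝ) ^ (-(d:ℝ)) with ht_def
  have ht_eq : t = ((2:ℝ)^d)⁻¹ := by
    rw [ht_def, ← Real.rpow_natCast 2 d, ← Real.rpow_neg (by norm_num)]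
  have ht0 : 0 ≤ t := by rw [ht_eq]; positivity
  set x : ℕ → ℝ := fun k => (1 - 2*(k:ℝ)/d)*α + β with hx_def
  have hfold : ∀ k : ℕ, (1 - 2*(k:ℝ)/d)*α + β = x k := fun k => rfl
  simp only [hfold]
  -- polynomial part vanishes
  have hkill : ∀ n, n < d → ∑ k ∈ range (d+1), (-1:ℝ)^k * (d.choose k) * (x k)^n = 0 := by
    intro n hn
    have : ∀ k : ℕ, x k = (-(2*α/d))*(k:ℝ) + (α+β) := by intro k; rw [hx_def]; ring
    simp_rw [this]
    exact kill d n hn _ _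
  have h0 : ∑ k ∈ range (d+1), (-1:ℝ)^k * (d.choose k) = 0 := by
    have := hkill 0 hd
    simpa using this
  have hpoly : ∑ k ∈ range (d+1), (-1:ℝ)^k * (d.choose k)
      * (1/4 + 1/(2*π) * (∑ m ∈ range M, cc m * (x k)^(2*m+1))) = 0 := by
    have expand : ∀ k ∈ range (d+1), (-1:ℝ)^k * (d.choose k)
        * (1/4 + 1/(2*π) * (∑ m ∈ range M, cc m * (x k)^(2*m+1)))
        = (-1:ℝ)^k * (d.choose k) * (1/4)
          + ∑ m ∈ range M, (1/(2*π)) * cc m * ((-1:ℝ)^k * (d.choose k) * (x k)^(2*m+1)) := by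
      intro k _
      rw [mul_add, Finset.mul_sum, Finset.mul_sum]
      congr 1
      apply Finset.sum_congr rfl
      intro m _
      ring
    rw [Finset.sum_congr rfl expand, Finset.sum_add_distrib, ← Finset.sum_mul, h0, zero_mul,
      zero_add, Finset.sum_comm]
    apply Finset.sum_eq_zero
    intro m hm
    have hmd : 2*m+1 < d := by
      have h1 := Finset.mem_range.1 hm
      omega
    rw [← Finset.mul_sum, hkill (2*m+1) hmd, mul_zero]
  -- rewrite total sum as remainder sum
  have key : ∑ k ∈ range (d+1), t * (d.choose k : ℝ) * (-1:ℝ)^k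
        * (1/4 + 1/(2*π) * arcsin (x k))
      = ∑ k ∈ range (d+1), t * (d.choose k : ℝ) * (-1:ℝ)^k
        * (1/(2*π) * (arcsin (x k) - ∑ m ∈ range M, cc m * (x k)^(2*m+1))) := by
    rw [← sub_eq_zero, ← Finset.sum_sub_distrib]
    have : ∀ k ∈ range (d+1), t * (d.choose k : ℝ) * (-1:ℝ)^k
          * (1/4 + 1/(2*π) * arcsin (x k))
        - t * (d.choose k : ℝ) * (-1:ℝ)^k
          * (1/(2*π) * (arcsin (x k) - ∑ m ∈ range M, cc m * (x k)^(2*m+1)))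
        = t * ((-1:ℝ)^k * (d.choose k)
            * (1/4 + 1/(2*π) * (∑ m ∈ range M, cc m * (x k)^(2*m+1)))) := by
      intro k _
      ring
    rw [Finset.sum_congr rfl this, ← Finset.mul_sum, hpoly, mul_zero]
  rw [key]
  -- bound per-term
  have hterm : ∀ k ∈ range (d+1),
      |t * (d.choose k : ℝ) * (-1:ℝ)^k
        * (1/(2*π) * (arcsin (x k) - ∑ m ∈ range M, cc m * (x k)^(2*m+1)))|
      ≤ t * (d.choose k : ℝ) * (1/4) * (r^k + r^(d-k)) := by
    intro k hk
    have hkd : k ≤ d := by have := Finset.mem_range.1 hk; omega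
    set m : ℕ := min k (d-k) with hm_def
    have hmk : (m:ℝ) ≤ k := by exact_mod_cast Nat.min_le_left k (d-k)
    have hmdk : (m:ℝ) ≤ (d:ℝ) - k := by
      have h1 : m ≤ d - k := Nat.min_le_right k (d-k)
      have h2 : ((d-k:ℕ):ℝ) = (d:ℝ) - k := by
        rw [Nat.cast_sub hkd]
      calc (m:ℝ) ≤ ((d-k:ℕ):ℝ) := by exact_mod_cast h1
        _ = (d:ℝ) - k := h2
    have hm0 : (0:ℝ) ≤ m := Nat.cast_nonneg m
    -- |x k| ≤ 1 - 2αm/d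
    have habs1 : |1 - 2*(k:ℝ)/d| ≤ 1 - 2*(m:ℝ)/d := by
      have hud : (0:ℝ) ≤ 1/d := by positivity
      have hdd : (d:ℝ) * (1/d) = 1 := by field_simp
      have hsum : ((m:ℝ) + k) * (1/d) ≤ (d:ℝ) * (1/d) :=
        mul_le_mul_of_nonneg_right (by linarith) hud
      rw [hdd] at hsum
      have hle : (m:ℝ)*(1/d) ≤ (k:ℝ)*(1/d) := mul_le_mul_of_nonneg_right hmk hud
      have e1 : 2*(k:ℝ)/d = 2*((k:ℝ)*(1/d)) := by ring
      have e2 : 2*(m:ℝ)/d = 2*((m:ℝ)*(1/d)) := by ring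
      rw [abs_le, e1, e2]
      constructor
      · nlinarith
      · nlinarith
    have hx1 : |x k| ≤ 1 - 2*α*m/d := by
      calc |x k| ≤ α * |1 - 2*(k:ℝ)/d| + |β| := by
            rw [hx_def]
            calc |(1 - 2*(k:ℝ)/d)*α + β| ≤ |(1 - 2*(k:ℝ)/d)*α| + |β| := abs_add_le _ _
              _ = α * |1 - 2*(k:ℝ)/d| + |β| := by
                  rw [abs_mul, abs_of_pos hα0]; ring
        _ ≤ α * (1 - 2*(m:ℝ)/d) + (1 - α) := by
            apply add_le_add (mul_le_mul_of_nonneg_left habs1 hα0.le) hβ'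
        _ = 1 - 2*α*m/d := by ring
    have hx_le1 : |x k| ≤ 1 := by
      have : 2*α*(m:ℝ)/d ≥ 0 := by positivity
      linarith
    -- |x k|^d ≤ r^m
    have hxd : |x k|^d ≤ r^m := by
      have hexp : 1 - 2*α*(m:ℝ)/d ≤ Real.exp (-(2*α*m/d)) := by
        have := Real.add_one_le_exp (-(2*α*(m:ℝ)/d))
        linarith
      calc |x k|^d ≤ (Real.exp (-(2*α*(m:ℝ)/d)))^d :=
            pow_le_pow_left₀ (abs_nonneg _) (hx1.trans hexp) d
        _ = Real.exp (-(2*α*(m:ℝ)/d) * d) := by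
            rw [← Real.exp_nat_mul]; ring_nf
        _ = Real.exp (-(2*α*(m:ℝ))) := by
            congr 1
            field_simp
        _ ≤ Real.exp (-(2*α₀*(m:ℝ))) := by
            apply Real.exp_le_exp.2
            nlinarith
        _ = r^m := by
            rw [hr_def, ← Real.exp_nat_mul]
            congr 1
            ring
    have hrm : r^m ≤ r^k + r^(d-k) := by
      rcases min_cases k (d-k) with ⟨h, _⟩ | ⟨h, _⟩
      · rw [hm_def, h]
        have : 0 ≤ r^(d-k) := by positivity
        linarith
      · rw [hm_def, h]
        have : 0 ≤ r^k := by positivity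
        linarith
    -- put together
    have habs : |t * (d.choose k : ℝ) * (-1:ℝ)^k
        * (1/(2*π) * (arcsin (x k) - ∑ m ∈ range M, cc m * (x k)^(2*m+1)))|
        = t * (d.choose k : ℝ) * (1/(2*π))
          * |arcsin (x k) - ∑ m ∈ range M, cc m * (x k)^(2*m+1)| := by
      rw [abs_mul, abs_mul, abs_mul, abs_mul, abs_pow, abs_neg, abs_one, one_pow,
        abs_of_nonneg ht0, Nat.abs_cast,
        abs_of_pos (by positivity : (0:ℝ) < 1/(2*π))]
      ring
    rw [habs]
    calc t * (d.choose k : ℝ) * (1/(2*π))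
          * |arcsin (x k) - ∑ m ∈ range M, cc m * (x k)^(2*m+1)|
        ≤ t * (d.choose k : ℝ) * (1/(2*π)) * (π/2 * |x k|^d) := by
          apply mul_le_mul_of_nonneg_left (rem_bound d hx_le1) (by positivity)
      _ = t * (d.choose k : ℝ) * (1/4) * |x k|^d := by
          have hπ : π ≠ 0 := Real.pi_ne_zero
          field_simp
          ring
      _ ≤ t * (d.choose k : ℝ) * (1/4) * (r^k + r^(d-k)) := by
          apply mul_le_mul_of_nonneg_left (hxd.trans hrm) (by positivity)
  -- sum the bound
  calc |∑ k ∈ range (d+1), t * (d.choose k : ℝ) * (-1:ℝ)^k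
        * (1/(2*π) * (arcsin (x k) - ∑ m ∈ range M, cc m * (x k)^(2*m+1)))|
      ≤ ∑ k ∈ range (d+1), |t * (d.choose k : ℝ) * (-1:ℝ)^k
        * (1/(2*π) * (arcsin (x k) - ∑ m ∈ range M, cc m * (x k)^(2*m+1)))| :=
        Finset.abs_sum_le_sum_abs _ _
    _ ≤ ∑ k ∈ range (d+1), t * (d.choose k : ℝ) * (1/4) * (r^k + r^(d-k)) :=
        Finset.sum_le_sum hterm
    _ = t * (1/4) * ((∑ k ∈ range (d+1), (d.choose k : ℝ) * r^k)
          + ∑ k ∈ range (d+1), (d.choose k : ℝ) * r^(d-k)) := by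
        rw [← Finset.sum_add_distrib, Finset.mul_sum]
        apply Finset.sum_congr rfl
        intro k _
        ring
    _ = t * (1/4) * (2 * (1+r)^d) := by
        congr 1
        have hb1 : ∑ k ∈ range (d+1), (d.choose k : ℝ) * r^k = (r+1)^d := by
          rw [add_pow]
          apply Finset.sum_congr rfl
          intro k _
          rw [one_pow]
          ring
        have hb2 : ∑ k ∈ range (d+1), (d.choose k : ℝ) * r^(d-k) = (1+r)^d := by
          rw [add_pow]
          apply Finset.sum_congr rfl
          intro k _
          rw [one_pow]
          ring
        rw [hb1, hb2]
        ring_nf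
    _ = (1/2) * q^d := by
        rw [ht_eq, hq_def, div_pow]
        field_simp
        ring
    _ ≤ 1 * Real.exp (-(-Real.log q) * d) := by
        have hq_pow : Real.exp (-(-Real.log q) * d) = q^d := by
          rw [neg_neg, mul_comm, Real.exp_nat_mul, Real.exp_log hq0]
        rw [hq_pow, one_mul]
        nlinarith [pow_nonneg hq0.le d]
end

section
/- Let d > 1 be an integer, b ∈ ℝ, and set c := ⌈(d − b)/2⌉ and c' := ⌊(d − b + 5)/2⌋, with the convention C(n,k) = 0 when k < 0 or k > n. Then: Δ_{d,b,ReLU} = ((−1)^{d+c}/2^d) [ (d + b) C(d−2, c−2) − (d − b) C(d−2, c−1) ], and for the clipped ReLU CReLU(t) := max(0, min(t, 5)): Δ_{d,b,CReLU} = ((−1)^{d+c}/2^d) [ (d + b) C(d−2, c−2) − (d − b) C(d−2, c−1) ] + ((−1)^{d+c'}/2^d) [ (d + b − 5) C(d−2, c'−1) − (d − b + 5) C(d−2, c') ]. -/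
/-- Clipped ReLU: `CReLU(t) = max(0, min(t,5))`. -/
noncomputable def CReLU : ℝ → ℝ := fun t => max 0 (min t 5)

/-- Binomial coefficient `C(n,k)` for an integer `k`, with the convention that it
vanishes for `k < 0` (and automatically for `k > n`). -/
noncomputable def chooseZ (n : ℕ) (k : ℤ) : ℝ := if 0 ≤ k then (n.choose k.toNat : ℝ) else 0

open Finset

lemma chooseZ_nat (n m : ℕ) : chooseZ n (m : ℤ) = (n.choose m : ℝ) := by
  simp [chooseZ]

lemma chooseZ_neg (n : ℕ) {k : ℤ} (h : k < 0) : chooseZ n k = 0 := by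
  simp [chooseZ, not_le.mpr h]

lemma chooseZ_big (n : ℕ) {k : ℤ} (h : (n : ℤ) < k) : chooseZ n k = 0 := by
  unfold chooseZ
  split_ifs with h0
  · rw [Nat.choose_eq_zero_of_lt (by omega), Nat.cast_zero]
  · rfl

lemma pascalZ (n : ℕ) (k : ℤ) : chooseZ (n+1) k = chooseZ n (k-1) + chooseZ n k := by
  rcases lt_trichotomy k 0 with h | h | h
  · rw [chooseZ_neg _ h, chooseZ_neg _ (by omega), chooseZ_neg _ h]; ring
  · subst h; simp [chooseZ]
  · unfold chooseZ
    rw [if_pos (by omega), if_pos (by omega), if_pos (by omega)]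
    have hk : k.toNat = (k.toNat - 1) + 1 := by omega
    have hk1 : (k-1).toNat = k.toNat - 1 := by omega
    rw [hk1, hk, Nat.choose_succ_succ]
    push_cast; ring

lemma absorbZ (n : ℕ) (k : ℤ) :
    (k : ℝ) * chooseZ n k = ((n : ℝ) + 1 - k) * chooseZ n (k-1) := by
  rcases lt_trichotomy k 0 with h | h | h
  · rw [chooseZ_neg _ h, chooseZ_neg _ (by omega)]; ring
  · subst h; simp [chooseZ_neg n (by norm_num : (0:ℤ)-1 < 0), chooseZ]
  · set j := k.toNat with hj
    have hk : k = (j : ℤ) := by omega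
    have hj1 : 1 ≤ j := by omega
    have h1 : chooseZ n k = (n.choose j : ℝ) := by rw [hk, chooseZ_nat]
    have h2 : chooseZ n (k-1) = (n.choose (j-1) : ℝ) := by
      rw [hk]
      have : (j : ℤ) - 1 = ((j - 1 : ℕ) : ℤ) := by omega
      rw [this, chooseZ_nat]
    rw [h1, h2, hk]
    have hnat := Nat.choose_succ_right_eq n (j-1)
    have hjj : j - 1 + 1 = j := by omega
    rw [hjj] at hnat
    by_cases hle : j ≤ n
    · have : ((n.choose j : ℕ) : ℝ) * j = (n.choose (j-1) : ℝ) * ((n - (j-1) : ℕ) : ℝ) := by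
        exact_mod_cast congrArg (Nat.cast : ℕ → ℝ) hnat
      rw [Nat.cast_sub (by omega)] at this
      push_cast at this ⊢
      rw [Nat.cast_sub hj1] at this
      push_cast at this
      nlinarith [this]
    · rcases Nat.lt_or_ge n (j-1) with hlt | hge
      · rw [Nat.choose_eq_zero_of_lt (by omega), Nat.choose_eq_zero_of_lt hlt]
        push_cast; ring
      · have hj : j = n + 1 := by omega
        rw [hj, Nat.choose_eq_zero_of_lt (by omega)]
        push_cast [hj]; ring

lemma stepid (d : ℕ) (hd : 2 ≤ d) (b : ℝ) (M : ℕ) (hM : 1 ≤ M) :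
    ((d:ℝ) + b) * chooseZ (d-1) ((M:ℤ)-1) - ((d:ℝ) - b) * chooseZ (d-1) (M:ℤ)
      = (2*(M:ℝ) - d + b) * (d.choose M : ℝ) := by
  set A := chooseZ (d-1) ((M:ℤ)-1)
  set B := chooseZ (d-1) (M:ℤ)
  have hp : (d.choose M : ℝ) = A + B := by
    have h1 : d - 1 + 1 = d := by omega
    have := pascalZ (d-1) (M:ℤ)
    rw [h1, chooseZ_nat] at this
    exact this
  have ha : (M:ℝ) * B = ((d:ℝ) - M) * A := by
    have := absorbZ (d-1) (M:ℤ)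
    have hc : ((d-1:ℕ):ℝ) + 1 = (d:ℝ) := by
      rw [Nat.cast_sub (by omega)]; ring
    rw [hc] at this
    simpa using this
  rw [hp]
  linarith [ha]

lemma prefix_sum (d : ℕ) (hd : 2 ≤ d) (b : ℝ) (m : ℕ) :
    ∑ k ∈ range (m+1), (-1:ℝ)^k * (2*(k:ℝ) - d + b) * (d.choose k : ℝ)
      = (-1:ℝ)^m * (((d:ℝ)+b) * chooseZ (d-2) ((m:ℤ)-1) - ((d:ℝ)-b) * chooseZ (d-2) (m:ℤ)) := by
  induction m with
  | zero =>
      rw [range_one, sum_singleton]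
      have h1 : chooseZ (d-2) ((0:ℕ):ℤ) = 1 := by simp [chooseZ]
      have h2 : chooseZ (d-2) (((0:ℕ):ℤ)-1) = 0 := chooseZ_neg _ (by norm_num)
      rw [h1, h2, Nat.choose_zero_right]
      push_cast
      ring
  | succ m ih =>
      rw [Finset.sum_range_succ, ih]
      have key : ((d:ℝ) + b) * chooseZ (d-2) ((m:ℤ)) - ((d:ℝ) - b) * chooseZ (d-2) ((m:ℤ)+1)
          + (((d:ℝ)+b) * chooseZ (d-2) ((m:ℤ)-1) - ((d:ℝ)-b) * chooseZ (d-2) (m:ℤ))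
          = (2*((m:ℝ)+1) - d + b) * (d.choose (m+1) : ℝ) := by
        have h1 : d - 2 + 1 = d - 1 := by omega
        have hp1 := pascalZ (d-2) ((m:ℤ)+1)
        have hp2 := pascalZ (d-2) (m:ℤ)
        rw [h1] at hp1 hp2
        simp only [add_sub_cancel_right] at hp1
        have := stepid d hd b (m+1) (by omega)
        push_cast at this ⊢
        rw [show ((m:ℤ)+1-1) = (m:ℤ) by ring] at this
        linear_combination this - ((d:ℝ)+b) * hp2 + ((d:ℝ)-b) * hp1
      push_cast
      rw [show ((m:ℤ)+1-1) = (m:ℤ) by ring]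
      linear_combination ((-1:ℝ)^m) * key

lemma total_sum (d : ℕ) (hd : 2 ≤ d) (b : ℝ) :
    ∑ k ∈ range (d+1), (-1:ℝ)^k * (2*(k:ℝ) - d + b) * (d.choose k : ℝ) = 0 := by
  rw [prefix_sum d hd b d, chooseZ_big (d-2) (by omega), chooseZ_big (d-2) (by omega)]
  ring

lemma tail_sum (d : ℕ) (hd : 2 ≤ d) (b : ℝ) (m : ℕ) (hm : 1 ≤ m) (hm2 : m ≤ d) :
    ∑ k ∈ Ico m (d+1), (-1:ℝ)^k * (2*(k:ℝ) - d + b) * (d.choose k : ℝ)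
      = (-1:ℝ)^m * (((d:ℝ)+b) * chooseZ (d-2) ((m:ℤ)-2) - ((d:ℝ)-b) * chooseZ (d-2) ((m:ℤ)-1)) := by
  have hsplit : (∑ k ∈ range m, (-1:ℝ)^k * (2*(k:ℝ) - d + b) * (d.choose k : ℝ))
      + ∑ k ∈ Ico m (d+1), (-1:ℝ)^k * (2*(k:ℝ) - d + b) * (d.choose k : ℝ)
      = ∑ k ∈ range (d+1), (-1:ℝ)^k * (2*(k:ℝ) - d + b) * (d.choose k : ℝ) := by
    rw [range_eq_Ico, range_eq_Ico]
    exact Finset.sum_Ico_consecutive (fun k : ℕ => (-1:ℝ)^k * (2*(k:ℝ) - d + b) * (d.choose k : ℝ)) (by omega : 0 ≤ m) (by omega : m ≤ d+1)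
  have hpre := prefix_sum d hd b (m-1)
  rw [show m - 1 + 1 = m from by omega] at hpre
  have hcast1 : ((m-1:ℕ):ℤ) - 1 = (m:ℤ) - 2 := by omega
  have hcast2 : ((m-1:ℕ):ℤ) = (m:ℤ) - 1 := by omega
  rw [hcast1, hcast2] at hpre
  have hpow : (-1:ℝ)^(m-1) = -(-1:ℝ)^m := by
    have : (-1:ℝ)^m = -(-1:ℝ)^(m-1) := by
      conv_lhs => rw [show m = (m-1)+1 from by omega]
      rw [pow_succ]; ring
    rw [this]; ring
  rw [hpow] at hpre
  have htot := total_sum d hd b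
  linarith [hsplit, hpre, htot]

def boolEquiv (d : ℕ) : Finset (Fin d) ≃ (Fin d → Bool) where
  toFun s := fun j => j ∈ s
  invFun x := univ.filter (fun j => x j = true)
  left_inv s := by ext j; simp
  right_inv x := by funext j; simp

lemma sum_boolfun (d : ℕ) (G : ℕ → ℝ) :
    ∑ x : Fin d → Bool, G (univ.filter (fun j => x j = true)).card
      = ∑ k ∈ range (d+1), (d.choose k : ℝ) * G k := by
  rw [← Equiv.sum_comp (boolEquiv d) (fun x => G (univ.filter (fun j => x j = true)).card)]
  have h1 : ∀ s : Finset (Fin d),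
      (univ.filter (fun j => (boolEquiv d) s j = true)).card = s.card := by
    intro s
    congr 1
    ext j
    simp [boolEquiv]
  simp only [h1]
  rw [show (univ : Finset (Finset (Fin d))) = (univ : Finset (Fin d)).powerset from
    (Finset.powerset_univ).symm]
  rw [Finset.sum_powerset_apply_card G]
  simp [card_univ, nsmul_eq_mul]

lemma prod_pm (d : ℕ) (x : Fin d → Bool) :
    (∏ j, pm (x j)) = (-1:ℝ)^(d - (univ.filter (fun j => x j = true)).card) := by
  have : ∀ j : Fin d, pm (x j) = if x j = true then (1:ℝ) else -1 := by
    intro j; simp [pm]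
  simp only [this]
  rw [Finset.prod_ite]
  rw [Finset.prod_const, Finset.prod_const, one_pow, one_mul]
  congr 1
  rw [Finset.filter_not, Finset.card_sdiff_of_subset (Finset.filter_subset _ _), card_univ,
    Fintype.card_fin]

lemma sum_pm (d : ℕ) (x : Fin d → Bool) :
    (∑ j, pm (x j)) = 2*((univ.filter (fun j => x j = true)).card : ℝ) - d := by
  have : ∀ j : Fin d, pm (x j) = if x j = true then (1:ℝ) else -1 := by
    intro j; simp [pm]
  simp only [this]
  rw [Finset.sum_ite, Finset.sum_const, Finset.sum_const, nsmul_eq_mul, nsmul_eq_mul,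
    mul_one]
  rw [Finset.filter_not, Finset.card_sdiff_of_subset (Finset.filter_subset _ _), card_univ,
    Fintype.card_fin]
  have hle : (univ.filter (fun j => x j = true)).card ≤ d := by
    calc (univ.filter (fun j => x j = true)).card ≤ (univ : Finset (Fin d)).card :=
      Finset.card_le_card (Finset.filter_subset _ _)
    _ = d := by rw [card_univ, Fintype.card_fin]
  rw [Nat.cast_sub hle]
  ring

lemma sum_eval (d : ℕ) (σ : ℝ → ℝ) (b : ℝ) :
    (∑ x : Fin d → Bool, (∏ j, pm (x j)) * σ ((∑ j, pm (x j)) + b))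
      = ∑ k ∈ range (d+1), (d.choose k : ℝ) * ((-1:ℝ)^(d-k) * σ (2*(k:ℝ) - d + b)) := by
  rw [← sum_boolfun d (fun k => (-1:ℝ)^(d-k) * σ (2*(k:ℝ) - d + b))]
  exact Fintype.sum_congr _ _ fun x => by rw [prod_pm, sum_pm]

lemma relu_sum (d : ℕ) (hd : 2 ≤ d) (b : ℝ) (c : ℤ) (hc : c = ⌈((d:ℝ) - b)/2⌉) :
    ∑ k ∈ range (d+1), (d.choose k : ℝ) * ((-1:ℝ)^(d-k) * ReLU (2*(k:ℝ) - d + b))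
      = (-1:ℝ)^((d:ℤ)+c) * (((d:ℝ)+b) * chooseZ (d-2) (c-2) - ((d:ℝ)-b) * chooseZ (d-2) (c-1)) := by
  have hpt : ∀ k ∈ range (d+1), (d.choose k : ℝ) * ((-1:ℝ)^(d-k) * ReLU (2*(k:ℝ) - d + b))
      = (-1:ℝ)^d * (if c ≤ (k:ℤ) then (-1:ℝ)^k * (2*(k:ℝ) - d + b) * (d.choose k : ℝ) else 0) := by
    intro k hk
    rw [mem_range] at hk
    have hsign : (-1:ℝ)^(d-k) = (-1:ℝ)^d * (-1:ℝ)^k := by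
      have h1 : (-1:ℝ)^d = (-1:ℝ)^(d-k) * (-1:ℝ)^k := by
        rw [← pow_add]; congr 1; omega
      have h2 : (-1:ℝ)^k * (-1:ℝ)^k = 1 := by
        rw [← pow_add]; exact Even.neg_one_pow ⟨k, rfl⟩
      rw [h1, mul_assoc, h2, mul_one]
    by_cases hge : c ≤ (k:ℤ)
    · have hnn : (0:ℝ) ≤ 2*(k:ℝ) - d + b := by
        have h := Int.ceil_le.mp (hc ▸ hge)
        push_cast at h
        linarith
      rw [if_pos hge, hsign]
      unfold ReLU
      rw [max_eq_right hnn]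
      ring
    · have hlt : 2*(k:ℝ) - d + b < 0 := by
        have h : (k:ℤ) < c := by omega
        have h2 : ((k:ℤ):ℝ) < ((d:ℝ) - b)/2 := by
          by_contra hcon
          push_neg at hcon
          have := Int.ceil_le.mpr hcon
          omega
        push_cast at h2
        linarith
      rw [if_neg hge]
      unfold ReLU
      rw [max_eq_left (le_of_lt hlt)]
      ring
  rw [Finset.sum_congr rfl hpt, ← Finset.mul_sum, ← Finset.sum_filter]
  rcases le_or_gt c 0 with hc0 | hc1
  · have hfil : (range (d+1)).filter (fun k : ℕ => c ≤ (k:ℤ)) = range (d+1) := by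
      apply Finset.filter_true_of_mem
      intro k _
      omega
    rw [hfil, total_sum d hd b, mul_zero,
      chooseZ_neg _ (by omega : c - 2 < 0), chooseZ_neg _ (by omega : c - 1 < 0)]
    ring
  · rcases le_or_gt c d with hcd | hdc
    · set m := c.toNat with hm
      have hmc : (m:ℤ) = c := Int.toNat_of_nonneg (by omega)
      have hfil : (range (d+1)).filter (fun k : ℕ => c ≤ (k:ℤ)) = Ico m (d+1) := by
        ext k
        simp only [mem_filter, mem_range, mem_Ico]
        omega
      rw [hfil, tail_sum d hd b m (by omega) (by omega)]
      have hsign : (-1:ℝ)^((d:ℤ)+c) = (-1:ℝ)^d * (-1:ℝ)^m := by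
        rw [← hmc, ← Nat.cast_add, zpow_natCast, pow_add]
      rw [hsign, show (m:ℤ) - 2 = c - 2 from by omega, show (m:ℤ) - 1 = c - 1 from by omega]
      ring
    · have hfil : (range (d+1)).filter (fun k : ℕ => c ≤ (k:ℤ)) = ∅ := by
        rw [Finset.filter_eq_empty_iff]
        intro k hk
        rw [mem_range] at hk
        omega
      rw [hfil, Finset.sum_empty, mul_zero,
        chooseZ_big _ (by omega : ((d-2:ℕ):ℤ) < c - 2), chooseZ_big _ (by omega : ((d-2:ℕ):ℤ) < c - 1)]
      ring

lemma crelu_pt (t : ℝ) : CReLU t = ReLU t - ReLU (t - 5) := by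
  unfold CReLU ReLU
  simp only [max_def, min_def]
  split_ifs <;> linarith

lemma combo (d : ℕ) (hd : 2 ≤ d) (b : ℝ) (c2 c' : ℤ)
    (hc2 : c2 = ⌈((d:ℝ) - (b-5))/2⌉) (hc' : c' = ⌊((d:ℝ) - b + 5)/2⌋) :
    -((-1:ℝ)^((d:ℤ)+c2) * (((d:ℝ)+(b-5)) * chooseZ (d-2) (c2-2)
        - ((d:ℝ)-(b-5)) * chooseZ (d-2) (c2-1)))
      = (-1:ℝ)^((d:ℤ)+c') * (((d:ℝ)+b-5) * chooseZ (d-2) (c'-1)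
        - ((d:ℝ)-b+5) * chooseZ (d-2) c') := by
  have harg : ((d:ℝ) - (b-5))/2 = ((d:ℝ) - b + 5)/2 := by ring
  rw [harg] at hc2
  have h1 : c' ≤ c2 := by rw [hc2, hc']; exact Int.floor_le_ceil _
  have h2 : c2 ≤ c' + 1 := by rw [hc2, hc']; exact Int.ceil_le_floor_add_one _
  rcases (by omega : c2 = c' ∨ c2 = c' + 1) with he | he
  · -- integer case
    have hy : ((d:ℝ) - b + 5)/2 = (c':ℝ) := by
      have hf := Int.floor_le (((d:ℝ) - b + 5)/2)
      have hcl := Int.le_ceil (((d:ℝ) - b + 5)/2)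
      rw [← hc'] at hf
      rw [← hc2, he] at hcl
      linarith
    have hyy : (d:ℝ) - b + 5 = 2*(c':ℝ) := by linarith [hy]
    have hp1 := pascalZ (d-2) c'
    have hp2 := pascalZ (d-2) (c'-1)
    rw [show d - 2 + 1 = d - 1 from by omega] at hp1 hp2
    have ha := absorbZ (d-1) c'
    rw [show ((d-1:ℕ):ℝ) = (d:ℝ) - 1 from by rw [Nat.cast_sub (by omega)]; norm_num] at ha
    rw [show c' - 1 - 1 = c' - 2 from by ring] at hp2
    have key : ((d:ℝ)-b+5) * chooseZ (d-1) c' = ((d:ℝ)+b-5) * chooseZ (d-1) (c'-1) := by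
      linear_combination 2*ha + (chooseZ (d-1) c' + chooseZ (d-1) (c'-1)) * hyy
    rw [he]
    linear_combination ((-1:ℝ)^((d:ℤ)+c')) *
      (key - ((d:ℝ)-b+5) * hp1 + ((d:ℝ)+b-5) * hp2)
  · rw [he]
    have hs : (-1:ℝ)^((d:ℤ)+(c'+1)) = -(-1:ℝ)^((d:ℤ)+c') := by
      rw [show (d:ℤ)+(c'+1) = ((d:ℤ)+c')+1 from by ring, zpow_add₀ (by norm_num : (-1:ℝ) ≠ 0),
        zpow_one]
      ring
    rw [hs, show c' + 1 - 2 = c' - 1 from by ring, show c' + 1 - 1 = c' from by ring]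
    ring

/-- closed formulas for `Δ_{d,b,ReLU}` and `Δ_{d,b,CReLU}` with
`c = ⌈(d−b)/2⌉` and `c' = ⌊(d−b+5)/2⌋`, using the convention `C(n,k) = 0` for
`k < 0` or `k > n`. Here `Δ_{d,b,σ} = Δ^{(0)}_{d,b,σ}`. -/
theorem stmt_16 (d : ℕ) (hd : 1 < d) (b : ℝ) (c c' : ℤ)
    (hc : c = ⌈((d : ℝ) - b) / 2⌉) (hc' : c' = ⌊((d : ℝ) - b + 5) / 2⌋) :
    Δa d 0 b ReLU
      = (-1 : ℝ) ^ ((d : ℤ) + c) / 2 ^ d *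
          (((d : ℝ) + b) * chooseZ (d - 2) (c - 2) - ((d : ℝ) - b) * chooseZ (d - 2) (c - 1)) ∧
    Δa d 0 b CReLU
      = (-1 : ℝ) ^ ((d : ℤ) + c) / 2 ^ d *
          (((d : ℝ) + b) * chooseZ (d - 2) (c - 2) - ((d : ℝ) - b) * chooseZ (d - 2) (c - 1))
        + (-1 : ℝ) ^ ((d : ℤ) + c') / 2 ^ d *
          (((d : ℝ) + b - 5) * chooseZ (d - 2) (c' - 1)
            - ((d : ℝ) - b + 5) * chooseZ (d - 2) c') := by
  have hd2 : 2 ≤ d := hd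
  have key : ∀ σ : ℝ → ℝ, Δa d 0 b σ
      = (∑ k ∈ range (d+1), (d.choose k : ℝ) * ((-1:ℝ)^(d-k) * σ (2*(k:ℝ) - d + b))) / 2^d := by
    intro σ
    unfold Δa Eunif parityF
    rw [← sum_eval]
    have hfil : (Finset.univ.filter (fun j : Fin d => (j:ℕ) < d - 0)) = Finset.univ :=
      Finset.filter_true_of_mem (fun j _ => by omega)
    rw [hfil]
  constructor
  · rw [key, relu_sum d hd2 b c hc]
    ring
  · rw [key]
    set c2 : ℤ := ⌈((d:ℝ) - (b-5))/2⌉ with hc2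
    have h1 := relu_sum d hd2 b c hc
    have h2 := relu_sum d hd2 (b-5) c2 hc2
    have h3 := combo d hd2 b c2 c' hc2 hc'
    have h0 : (∑ k ∈ range (d+1), (d.choose k : ℝ) * ((-1:ℝ)^(d-k) * CReLU (2*(k:ℝ) - d + b)))
        = (∑ k ∈ range (d+1), (d.choose k : ℝ) * ((-1:ℝ)^(d-k) * ReLU (2*(k:ℝ) - d + b)))
          - ∑ k ∈ range (d+1), (d.choose k : ℝ) * ((-1:ℝ)^(d-k) * ReLU (2*(k:ℝ) - d + (b-5))) := by
      rw [← Finset.sum_sub_distrib]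
      refine Finset.sum_congr rfl fun k _ => ?_
      rw [crelu_pt, show 2*(k:ℝ) - d + b - 5 = 2*(k:ℝ) - d + (b-5) from by ring]
      ring
    rw [h0]
    linear_combination (h1 - h2 + h3) / 2^d
end
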